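/- arXiv:1809.09423 — 7 statements merged into one kernel-verified Lean document; each statement's English description precedes it below -/
import Mathlib

section
/- In the James space J with its boundedly complete basis (e_i), the shift operator S : J → J defined by S(e_i) = e_{i+1} is a linear isometry, and the operator T = I − S is weakly compact, while e_i*(T(e_i)) = 1 for all i. Consequently the basis (e_i) of J does not have the factorization property. -/
/-!
`T = I − S` kills the `w*`-limit `e**` of the basis after dualising: `e**(f ∘ T)` is the limit of
`f(eᵢ) − f(eᵢ₊₁)`, which is `0`. Since `J** = ℝe** ⊕ J`, the bidual `T**` therefore maps `J**` into
`J`. By Banach–Alaoglu this makes `T` weakly compact, and if `B T A = I` then `I** = B** T** A**`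
would also map `J**` into `J`, i.e. `J` would be reflexive, contradicting `e** ∉ J`.
-/

open Filter Topology NormedSpace

namespace ContinuousLinearMap

variable {𝕜 E F X : Type*} [RCLike 𝕜] [NormedAddCommGroup E] [NormedSpace 𝕜 E]
  [NormedAddCommGroup F] [NormedSpace 𝕜 F] [NormedAddCommGroup X] [NormedSpace 𝕜 X]

/-- `precomp 𝕜 T` is the adjoint `T*`, so this says `T**(E**) ⊆ F`. -/
def MapsBidualIntoCodomain (T : E →L[𝕜] F) : Prop :=
  ∀ Φ : StrongDual 𝕜 (StrongDual 𝕜 E), ∃ y : F,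
    Φ.comp (precomp 𝕜 T) = inclusionInDoubleDual 𝕜 F y

theorem MapsBidualIntoCodomain.isCompact_closure_image_closedBall {T : E →L[𝕜] F}
    (hT : T.MapsBidualIntoCodomain) :
    IsCompact (closure ((fun x : E => (show WeakSpace 𝕜 F from T x)) '' Metric.closedBall 0 1)) := by
  let Ψ : WeakDual 𝕜 (StrongDual 𝕜 E) → WeakDual 𝕜 (StrongDual 𝕜 F) :=
    fun Φ => Φ.comp (precomp 𝕜 T)
  have hΨ : Continuous Ψ :=
    WeakDual.continuous_of_continuous_eval fun f => WeakDual.eval_continuous (f.comp T)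
  set K := Ψ '' (WeakDual.toStrongDual ⁻¹' Metric.closedBall 0 1)
  have hK : IsCompact K := (WeakDual.isCompact_closedBall 0 1).image hΨ
  have hK_range : K ⊆ Set.range (inclusionInDoubleDualWeak 𝕜 F) := by
    rintro _ ⟨Φ, -, rfl⟩
    obtain ⟨y, hy⟩ := hT Φ
    exact ⟨y, hy.symm⟩
  have h_image : inclusionInDoubleDualWeak 𝕜 F '' ((fun x : E => (show WeakSpace 𝕜 F from T x)) ''
      Metric.closedBall 0 1) ⊆ K := by
    rintro _ ⟨_, ⟨x, hx, rfl⟩, rfl⟩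
    refine ⟨StrongDual.toWeakDual (inclusionInDoubleDual 𝕜 E x), ?_, rfl⟩
    refine (dist_zero_right (inclusionInDoubleDual 𝕜 E x)).le.trans ?_
    exact (double_dual_bound 𝕜 E x).trans (mem_closedBall_zero_iff.mp hx)
  apply isCompact_closure_of_isBounded
  · exact T.lipschitz.isBounded_image Metric.isBounded_closedBall
  · exact (closure_minimal h_image hK.isClosed).trans hK_range

theorem MapsBidualIntoCodomain.surjective_inclusionInDoubleDual_of_comp_eq_id {T : E →L[𝕜] F}
    (hT : T.MapsBidualIntoCodomain) {A : X →L[𝕜] E} {B : F →L[𝕜] X}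
    (hBTA : B.comp (T.comp A) = ContinuousLinearMap.id 𝕜 X) :
    Function.Surjective (inclusionInDoubleDual 𝕜 X) := by
  intro Φ
  obtain ⟨y, hy⟩ := hT (Φ.comp (precomp 𝕜 A))
  refine ⟨B y, ext fun f => ?_⟩
  calc f (B y) = inclusionInDoubleDual 𝕜 F y (f.comp B) := rfl
    _ = Φ (((f.comp B).comp T).comp A) := by rw [← hy]; rfl
    _ = Φ f := by rw [comp_assoc, comp_assoc, hBTA, comp_id]

theorem mapsBidualIntoCodomain_of_bidual_eq_smul_add {T : E →L[𝕜] F}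
    {Ψ : StrongDual 𝕜 (StrongDual 𝕜 E)}
    (hE : ∀ Φ : StrongDual 𝕜 (StrongDual 𝕜 E), ∃ (c : 𝕜) (x : E),
      Φ = c • Ψ + inclusionInDoubleDual 𝕜 E x)
    (hΨT : ∀ f : StrongDual 𝕜 F, Ψ (f.comp T) = 0) :
    T.MapsBidualIntoCodomain := by
  intro Φ
  obtain ⟨c, x, rfl⟩ := hE Φ
  refine ⟨T x, ext fun f => ?_⟩
  simp [hΨT]

theorem apply_comp_id_sub_eq_zero_of_tendsto {Ψ : StrongDual 𝕜 (StrongDual 𝕜 E)} {e : ℕ → E}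
    (he : ∀ f : StrongDual 𝕜 E, Tendsto (fun i => f (e i)) atTop (𝓝 (Ψ f)))
    {S : E →L[𝕜] E} (hS : ∀ i, S (e i) = e (i + 1)) (f : StrongDual 𝕜 E) :
    Ψ (f.comp (ContinuousLinearMap.id 𝕜 E - S)) = 0 := by
  have h_shift : Tendsto (fun i => f (e i) - f (e (i + 1))) atTop (𝓝 (Ψ f - Ψ f)) :=
    (he f).sub ((he f).comp (tendsto_add_atTop_nat 1))
  refine tendsto_nhds_unique (he _) ?_
  simpa [hS] using h_shift

end ContinuousLinearMap

open ContinuousLinearMap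

theorem stmt_4_general {J : Type*} [NormedAddCommGroup J] [NormedSpace ℝ J]
    (e : ℕ → J) (estar : ℕ → J →L[ℝ] ℝ)
    (hbi : ∀ i j, estar i (e j) = if i = j then 1 else 0)
    (ess : StrongDual ℝ (StrongDual ℝ J))
    (hwlim : ∀ f : StrongDual ℝ J, Tendsto (fun i => f (e i)) atTop (𝓝 (ess f)))
    (hnontriv : ∀ x : J, inclusionInDoubleDual ℝ J x ≠ ess)
    (hquasi : ∀ F : StrongDual ℝ (StrongDual ℝ J), ∃ (c : ℝ) (x : J),
      F = c • ess + inclusionInDoubleDual ℝ J x)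
    (S : J →L[ℝ] J) (hS : ∀ i, S (e i) = e (i + 1)) :
    (∀ i, estar i ((ContinuousLinearMap.id ℝ J - S) (e i)) = 1) ∧
    IsCompact (closure
      ((fun x : J => (show WeakSpace ℝ J from (ContinuousLinearMap.id ℝ J - S) x)) ''
        Metric.closedBall 0 1)) ∧
    ¬ (∀ T : J →L[ℝ] J, (∃ δ > 0, ∀ i, δ ≤ |estar i (T (e i))|) →
        ∃ A B : J →L[ℝ] J, B.comp (T.comp A) = ContinuousLinearMap.id ℝ J) := by
  have h_diag : ∀ i, estar i ((ContinuousLinearMap.id ℝ J - S) (e i)) = 1 := fun i => by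
    simp [hS, hbi]
  have h_bidual : (ContinuousLinearMap.id ℝ J - S).MapsBidualIntoCodomain :=
    mapsBidualIntoCodomain_of_bidual_eq_smul_add hquasi
      (apply_comp_id_sub_eq_zero_of_tendsto hwlim hS)
  refine ⟨h_diag, h_bidual.isCompact_closure_image_closedBall, fun h_factor => ?_⟩
  obtain ⟨A, B, hBTA⟩ := h_factor _ ⟨1, one_pos, fun i => by rw [h_diag i, abs_one]⟩
  obtain ⟨x, hx⟩ := h_bidual.surjective_inclusionInDoubleDual_of_comp_eq_id hBTA ess
  exact hnontriv x hx

/-- In the James space `J` with its boundedly complete basis `(e i)` (encoded here via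
its defining properties: biorthogonal functionals, dense span, the basis is non-trivial
weak Cauchy with w*-limit `ess ∈ J** \ J`, and `J` is quasi-reflexive of order one,
`J** = ℝ·ess ⊕ J`), the shift `S`, `S (e i) = e (i+1)`, is a linear isometry; then
`T = I − S` is weakly compact, `eᵢ*(T eᵢ) = 1` for all `i`, and consequently the basis
`(e i)` does not have the factorization property. -/
theorem stmt_4 {J : Type*} [NormedAddCommGroup J] [NormedSpace ℝ J] [CompleteSpace J]
    (e : ℕ → J) (estar : ℕ → J →L[ℝ] ℝ)
    (hbi : ∀ i j, estar i (e j) = if i = j then 1 else 0)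
    (hdense : (Submodule.span ℝ (Set.range e)).topologicalClosure = ⊤)
    (ess : StrongDual ℝ (StrongDual ℝ J))
    (hwlim : ∀ f : StrongDual ℝ J, Tendsto (fun i => f (e i)) atTop (𝓝 (ess f)))
    (hnontriv : ∀ x : J, inclusionInDoubleDual ℝ J x ≠ ess)
    (hquasi : ∀ F : StrongDual ℝ (StrongDual ℝ J), ∃ (c : ℝ) (x : J),
      F = c • ess + inclusionInDoubleDual ℝ J x)
    (S : J →L[ℝ] J) (hS : ∀ i, S (e i) = e (i + 1))
    (hSiso : ∀ x : J, ‖S x‖ = ‖x‖) :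
    (∀ i, estar i ((ContinuousLinearMap.id ℝ J - S) (e i)) = 1) ∧
    IsCompact (closure
      ((fun x : J => (show WeakSpace ℝ J from (ContinuousLinearMap.id ℝ J - S) x)) ''
        Metric.closedBall 0 1)) ∧
    ¬ (∀ T : J →L[ℝ] J, (∃ δ > 0, ∀ i, δ ≤ |estar i (T (e i))|) →
        ∃ A B : J →L[ℝ] J, B.comp (T.comp A) = ContinuousLinearMap.id ℝ J) :=
  stmt_4_general e estar hbi ess hwlim hnontriv hquasi S hS
end

section
/- Let T : J → J be a bounded linear operator on James space with sup_i ‖T(e_i) − e_i‖ < 1. Then the identity on J factors through T, i.e. there exist bounded operators A, B : J → J with I = B ∘ T ∘ A. -/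
open Filter Topology NormedSpace

/-!
The weak*-limit `F` of `(T eᵢ)` lies within distance `sup ‖T eᵢ - eᵢ‖ < 1` of `e**`, hence
outside `J`, so a subsequence `(T e_{kᵢ})` is equivalent to `(eᵢ)` and spans a complemented
subspace. Put `A eᵢ = e_{kᵢ}` (an isometry, because `(eᵢ)` is spreading) and let `B` be the
projection onto that subspace followed by `T e_{kᵢ} ↦ eᵢ`; then `B T A eᵢ = eᵢ`.
-/

section Spreading

variable (𝕜 : Type*) {E : Type*} [NormedField 𝕜] [SeminormedAddCommGroup E] [NormedSpace 𝕜 E]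

def IsSpreading (e : ℕ → E) : Prop :=
  ∀ (n : ℕ) (a : Fin n → 𝕜) (k : Fin n → ℕ), StrictMono k →
    ‖∑ i, a i • e (k i)‖ = ‖∑ i, a i • e i.val‖

variable {𝕜} {e : ℕ → E}

theorem IsSpreading.norm_eq (he : IsSpreading 𝕜 e) (i : ℕ) : ‖e i‖ = ‖e 0‖ := by
  simpa using he 1 (fun _ => 1) (fun _ => i) (Subsingleton.strictMono _)

open Finsupp in
theorem IsSpreading.norm_linearCombination_comp (he : IsSpreading 𝕜 e) {k : ℕ → ℕ}
    (hk : StrictMono k) (c : ℕ →₀ 𝕜) :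
    ‖linearCombination 𝕜 (e ∘ k) c‖ = ‖linearCombination 𝕜 e c‖ := by
  let σ := c.support.orderIsoOfFin rfl
  -- both sides are spread copies of the sum over the support listed in increasing order
  have h_enum : ∀ g : ℕ → ℕ, StrictMono g →
      ‖linearCombination 𝕜 (e ∘ g) c‖ = ‖∑ j : Fin c.support.card, c (σ j) • e j.val‖ := by
    intro g hg
    rw [linearCombination_apply, Finsupp.sum, ← Finset.sum_coe_sort c.support,
      ← Equiv.sum_comp σ.toEquiv]
    exact he _ (fun j => c (σ j)) (fun j => g (σ j))
      (hg.comp ((Subtype.strictMono_coe _).comp σ.strictMono))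
  rw [h_enum k hk, ← h_enum id strictMono_id]
  rfl

end Spreading

section Operators

variable {𝕜 ι E F : Type*} [NontriviallyNormedField 𝕜]
  [NormedAddCommGroup E] [NormedSpace 𝕜 E] [NormedAddCommGroup F] [NormedSpace 𝕜 F]

theorem norm_sub_le_of_weakStar_tendsto {u v : ℕ → E} {G H : StrongDual 𝕜 (StrongDual 𝕜 E)}
    (hu : ∀ f : StrongDual 𝕜 E, Tendsto (fun i => f (u i)) atTop (𝓝 (G f)))
    (hv : ∀ f : StrongDual 𝕜 E, Tendsto (fun i => f (v i)) atTop (𝓝 (H f)))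
    {c : ℝ} (huv : ∀ i, ‖u i - v i‖ ≤ c) : ‖G - H‖ ≤ c := by
  refine ContinuousLinearMap.opNorm_le_bound _ ((norm_nonneg _).trans (huv 0)) fun f => ?_
  have hlim : Tendsto (fun i => f (u i - v i)) atTop (𝓝 ((G - H) f)) := by
    simpa only [map_sub, sub_apply] using (hu f).sub (hv f)
  refine le_of_tendsto' hlim.norm fun i => ?_
  calc ‖f (u i - v i)‖ ≤ ‖f‖ * ‖u i - v i‖ := f.le_opNorm _
    _ ≤ c * ‖f‖ := by rw [mul_comm]; gcongr; exact huv i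

open Finsupp in
theorem exists_continuousLinearMap_apply_eq_of_norm_le [CompleteSpace F] (x : ι → E) (y : ι → F)
    {C : ℝ} (h : ∀ c, ‖linearCombination 𝕜 y c‖ ≤ C * ‖linearCombination 𝕜 x c‖)
    (P : E →L[𝕜] E) (hP : IsIdempotentElem P)
    (hPrange : LinearMap.range (P : E →ₗ[𝕜] E) =
      (Submodule.span 𝕜 (Set.range x)).topologicalClosure) :
    ∃ L : E →L[𝕜] F, ∀ i, L (x i) = y i := by
  set Q := (Submodule.span 𝕜 (Set.range x)).topologicalClosure
  have hxQ : ∀ c, linearCombination 𝕜 x c ∈ Q := fun c =>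
    Submodule.le_topologicalClosure _ (range_linearCombination (R := 𝕜) (v := x) ▸ ⟨c, rfl⟩)
  let xQ : (ι →₀ 𝕜) →ₗ[𝕜] Q := (linearCombination 𝕜 x).codRestrict Q hxQ
  have hdense : DenseRange xQ := by
    rw [DenseRange, Subtype.dense_iff, ← Set.range_comp]
    change (Q : Set E) ⊆ closure (Set.range (linearCombination 𝕜 x))
    rw [← LinearMap.coe_range, range_linearCombination, ← Submodule.topologicalClosure_coe]
  have hPQ : ∀ z, P z ∈ Q := fun z => hPrange ▸ LinearMap.mem_range_self _ z
  have hPx : ∀ i, P (x i) = x i := fun i =>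
    (LinearMap.IsIdempotentElem.mem_range_iff
      (ContinuousLinearMap.IsIdempotentElem.toLinearMap hP)).mp
      (hPrange ▸ Submodule.le_topologicalClosure _ (Submodule.subset_span ⟨i, rfl⟩))
  refine ⟨((linearCombination 𝕜 y).extendOfNorm xQ).comp (P.codRestrict Q hPQ), fun i => ?_⟩
  have hxi : P.codRestrict Q hPQ (x i) = xQ (single i 1) := by
    ext
    simp [xQ, hPx]
  rw [ContinuousLinearMap.comp_apply, hxi, LinearMap.extendOfNorm_eq hdense ⟨C, h⟩]
  simp

end Operators

theorem stmt_5_general {J : Type*} [NormedAddCommGroup J] [NormedSpace ℝ J] [CompleteSpace J]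
    (e : ℕ → J)
    (hdense : (Submodule.span ℝ (Set.range e)).topologicalClosure = ⊤)
    (hspread : ∀ (n : ℕ) (a : Fin n → ℝ) (k : Fin n → ℕ), StrictMono k →
      ‖∑ i, a i • e (k i)‖ = ‖∑ i, a i • e i.val‖)
    (ess : StrongDual ℝ (StrongDual ℝ J))
    (hwlim : ∀ f : StrongDual ℝ J, Tendsto (fun i => f (e i)) atTop (𝓝 (ess f)))
    (hdist : ∀ x : J, (1 : ℝ) ≤ ‖ess - inclusionInDoubleDual ℝ J x‖)
    (hsub : ∀ x : ℕ → J, (∃ M : ℝ, ∀ i, ‖x i‖ ≤ M) →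
      ∀ F : StrongDual ℝ (StrongDual ℝ J),
        (∀ f : StrongDual ℝ J, Tendsto (fun i => f (x i)) atTop (𝓝 (F f))) →
        (∀ z : J, inclusionInDoubleDual ℝ J z ≠ F) →
        ∃ k : ℕ → ℕ, StrictMono k ∧
          (∃ C > (0 : ℝ), ∀ c : ℕ →₀ ℝ,
            (1 / C) * ‖∑ i ∈ c.support, c i • e i‖ ≤ ‖∑ i ∈ c.support, c i • x (k i)‖ ∧
            ‖∑ i ∈ c.support, c i • x (k i)‖ ≤ C * ‖∑ i ∈ c.support, c i • e i‖) ∧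
          ∃ P : J →L[ℝ] J, P.comp P = P ∧
            LinearMap.range (P : J →ₗ[ℝ] J) =
              (Submodule.span ℝ (Set.range fun i => x (k i))).topologicalClosure)
    (T : J →L[ℝ] J) (hT : ∃ c < (1 : ℝ), ∀ i, ‖T (e i) - e i‖ ≤ c) :
    ∃ A B : J →L[ℝ] J, B.comp (T.comp A) = ContinuousLinearMap.id ℝ J := by
  obtain ⟨c, hc, hTe⟩ := hT
  -- `F = T** e**`
  set F := ess.comp (ContinuousLinearMap.precomp ℝ T)
  have hF : ∀ f : StrongDual ℝ J, Tendsto (fun i => f (T (e i))) atTop (𝓝 (F f)) :=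
    fun f => hwlim (f.comp T)
  have hF_notMem : ∀ z : J, inclusionInDoubleDual ℝ J z ≠ F := by
    rintro z hz
    have := norm_sub_le_of_weakStar_tendsto hwlim hF fun i => (norm_sub_rev _ _).trans_le (hTe i)
    linarith [hz ▸ hdist z]
  have hbdd : ∃ M, ∀ i, ‖T (e i)‖ ≤ M :=
    ⟨‖T‖ * ‖e 0‖, fun i => IsSpreading.norm_eq hspread i ▸ T.le_opNorm _⟩
  obtain ⟨k, hk, ⟨C, hC, hCe⟩, P, hP, hPrange⟩ := hsub _ hbdd F hF hF_notMem
  obtain ⟨A, hA⟩ := exists_continuousLinearMap_apply_eq_of_norm_le e (e ∘ k) (C := 1)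
    (fun c => by rw [one_mul]; exact (IsSpreading.norm_linearCombination_comp hspread hk c).le)
    1 .one (hdense ▸ LinearMap.range_id)
  obtain ⟨B, hB⟩ := exists_continuousLinearMap_apply_eq_of_norm_le (fun i => T (e (k i))) e
    (C := C) (fun c => by
      simpa only [Finsupp.linearCombination_apply, Finsupp.sum, one_div, inv_mul_le_iff₀ hC]
        using (hCe c).1) P hP hPrange
  refine ⟨A, B, ContinuousLinearMap.ext_on
    (Submodule.dense_iff_topologicalClosure_eq_top.mpr hdense) ?_⟩
  rintro _ ⟨i, rfl⟩
  simp [hA, hB]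

/-- James space: if `T : J → J` is a bounded operator with `sup_i ‖T eᵢ − eᵢ‖ < 1`, the
identity on `J` factors through `T`.  The James space is encoded via its defining
properties: the basis `(e i)` with biorthogonal functionals and dense span is spreading,
non-trivial weak Cauchy with w*-limit `ess` at distance `≥ 1` from `J`, `J` is
quasi-reflexive of order one, and every bounded sequence whose w*-limit lies outside `J`
has a subsequence equivalent to `(e i)` whose closed span is complemented. -/
theorem stmt_5 {J : Type*} [NormedAddCommGroup J] [NormedSpace ℝ J] [CompleteSpace J]
    (e : ℕ → J) (estar : ℕ → J →L[ℝ] ℝ)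
    (hbi : ∀ i j, estar i (e j) = if i = j then 1 else 0)
    (hdense : (Submodule.span ℝ (Set.range e)).topologicalClosure = ⊤)
    (hspread : ∀ (n : ℕ) (a : Fin n → ℝ) (k : Fin n → ℕ), StrictMono k →
      ‖∑ i, a i • e (k i)‖ = ‖∑ i, a i • e i.val‖)
    (ess : StrongDual ℝ (StrongDual ℝ J))
    (hwlim : ∀ f : StrongDual ℝ J, Tendsto (fun i => f (e i)) atTop (𝓝 (ess f)))
    (hdist : ∀ x : J, (1 : ℝ) ≤ ‖ess - inclusionInDoubleDual ℝ J x‖)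
    (hquasi : ∀ F : StrongDual ℝ (StrongDual ℝ J), ∃ (c : ℝ) (x : J),
      F = c • ess + inclusionInDoubleDual ℝ J x)
    (hsub : ∀ x : ℕ → J, (∃ M : ℝ, ∀ i, ‖x i‖ ≤ M) →
      ∀ F : StrongDual ℝ (StrongDual ℝ J),
        (∀ f : StrongDual ℝ J, Tendsto (fun i => f (x i)) atTop (𝓝 (F f))) →
        (∀ z : J, inclusionInDoubleDual ℝ J z ≠ F) →
        ∃ k : ℕ → ℕ, StrictMono k ∧
          (∃ C > (0 : ℝ), ∀ c : ℕ →₀ ℝ,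
            (1 / C) * ‖∑ i ∈ c.support, c i • e i‖ ≤ ‖∑ i ∈ c.support, c i • x (k i)‖ ∧
            ‖∑ i ∈ c.support, c i • x (k i)‖ ≤ C * ‖∑ i ∈ c.support, c i • e i‖) ∧
          ∃ P : J →L[ℝ] J, P.comp P = P ∧
            LinearMap.range (P : J →ₗ[ℝ] J) =
              (Submodule.span ℝ (Set.range fun i => x (k i))).topologicalClosure)
    (T : J →L[ℝ] J) (hT : ∃ c < (1 : ℝ), ∀ i, ‖T (e i) - e i‖ ≤ c) :
    ∃ A B : J →L[ℝ] J, B.comp (T.comp A) = ContinuousLinearMap.id ℝ J :=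
  stmt_5_general e hdense hspread ess hwlim hdist hsub T hT
end

section
/- Let X be a Banach space with a basis (e_n) whose basis constant is λ ≥ 1, with biorthogonal functionals (e_n*). Let (b_n), (b_n*) be block bases of (e_n) and (e_n*) respectively with b_m*(b_n) = δ_{m,n}, and suppose for some C ≥ 1 that ‖∑ ξⱼ bⱼ‖ ≤ √C ‖∑ ξⱼ eⱼ‖ and ‖∑ ξⱼ bⱼ*‖ ≤ √C ‖∑ ξⱼ eⱼ*‖ for all finitely supported scalar sequences (ξⱼ). Then Y = closed span of (bⱼ) is complemented in X and P : X → Y, P(x) = ∑ b_n*(x) b_n, is a well-defined bounded projection with ‖P‖ ≤ λC. -/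
open Filter Topology

/-!
Write `P_N x = ∑_{n<N} b*ₙ(x) bₙ`. For a functional `f`, `f ∘ P_N = ∑_{n<N} f(bₙ) b*ₙ` has norm
at most `√C ‖∑_{n<N} f(bₙ) e*ₙ‖`, and `∑_{n<N} f(bₙ) e*ₙ = f ∘ (y ↦ ∑_{n<N} e*ₙ(y) bₙ)`, an
operator of norm at most `√C λ` because `(bₙ)` is dominated by `(eₙ)` and the partial sum
projections of `(eₙ)` have norm at most `λ`. Hence `‖P_N‖ ≤ λC` for all `N`. As a block of
`(e*ⱼ)`, `b*ₙ` vanishes on `eⱼ` for `j < n`, so `P_N y` is eventually constant for `y` in the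
span of `(eₙ)`; by density and the uniform bound, `P_N x` then converges for every `x`, to a
bounded operator `P`. It fixes every `bₙ` and takes values in the closed span of `(bₙ)`, so it is
a projection onto it.
-/

section Expansion

variable {𝕜 E : Type*} [RCLike 𝕜] [NormedAddCommGroup E] [NormedSpace 𝕜 E]

noncomputable def partialExpansion (φ : ℕ → E →L[𝕜] 𝕜) (u : ℕ → E) (N : ℕ) : E →L[𝕜] E :=
  ∑ n ∈ Finset.range N, (φ n).smulRight (u n)

@[simp]
lemma partialExpansion_apply (φ : ℕ → E →L[𝕜] 𝕜) (u : ℕ → E) (N : ℕ) (x : E) :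
    partialExpansion φ u N x = ∑ n ∈ Finset.range N, φ n x • u n := by
  simp [partialExpansion]

lemma comp_partialExpansion (f : E →L[𝕜] 𝕜) (φ : ℕ → E →L[𝕜] 𝕜) (u : ℕ → E) (N : ℕ) :
    f.comp (partialExpansion φ u N) = ∑ n ∈ Finset.range N, f (u n) • φ n := by
  ext x
  simp [mul_comm]

lemma partialExpansion_apply_mem_span (φ : ℕ → E →L[𝕜] 𝕜) (u : ℕ → E) (N : ℕ) (x : E) :
    partialExpansion φ u N x ∈ Submodule.span 𝕜 (Set.range u) := by
  rw [partialExpansion_apply]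
  exact Submodule.sum_mem _ fun n _ => Submodule.smul_mem _ _ (Submodule.subset_span ⟨n, rfl⟩)

lemma partialExpansion_apply_of_lt {φ : ℕ → E →L[𝕜] 𝕜} {u : ℕ → E}
    (hbi : ∀ m n, φ m (u n) = if m = n then 1 else 0) {n N : ℕ} (hn : n < N) :
    partialExpansion φ u N (u n) = u n := by
  simp [hbi, hn]


lemma norm_sum_smul_le_of_finsupp {ι V W : Type*} [SeminormedAddCommGroup V] [Module 𝕜 V]
    [SeminormedAddCommGroup W] [Module 𝕜 W] {u : ι → V} {v : ι → W} {K : ℝ}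
    (h : ∀ c : ι →₀ 𝕜, ‖∑ j ∈ c.support, c j • u j‖ ≤ K * ‖∑ j ∈ c.support, c j • v j‖)
    (s : Finset ι) (a : ι → 𝕜) :
    ‖∑ j ∈ s, a j • u j‖ ≤ K * ‖∑ j ∈ s, a j • v j‖ := by
  have key := h (Finsupp.indicator s fun j _ => a j)
  change ‖Finsupp.sum _ fun j r => r • u j‖ ≤ K * ‖Finsupp.sum _ fun j r => r • v j‖ at key
  rwa [Finsupp.sum_indicator_index _ fun j _ => zero_smul 𝕜 (u j),
    Finsupp.sum_indicator_index _ fun j _ => zero_smul 𝕜 (v j)] at key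

lemma apply_finsuppSum_of_biorthogonal {ι : Type*} [DecidableEq ι] {e : ι → E}
    {estar : ι → E →L[𝕜] 𝕜} (hbie : ∀ i j, estar i (e j) = if i = j then 1 else 0)
    (c : ι →₀ 𝕜) (n : ι) : estar n (c.sum fun j a => a • e j) = c n := by
  simp [Finsupp.sum, hbie, eq_comm]

lemma apply_eq_zero_of_mem_span_Ico {e : ℕ → E} {estar : ℕ → E →L[𝕜] 𝕜}
    (hbie : ∀ i j, estar i (e j) = if i = j then 1 else 0) {a b j : ℕ} (hj : j < a)
    {φ : E →L[𝕜] 𝕜} (hφ : φ ∈ Submodule.span 𝕜 (estar '' Set.Ico a b)) : φ (e j) = 0 := by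
  have : Submodule.span 𝕜 (estar '' Set.Ico a b) ≤
      LinearMap.ker (ContinuousLinearMap.apply 𝕜 𝕜 (e j) : (E →L[𝕜] 𝕜) →ₗ[𝕜] 𝕜) := by
    refine Submodule.span_le.mpr ?_
    rintro _ ⟨i, hi, rfl⟩
    simp [hbie, ((Set.mem_Ico.mp hi).1.trans_lt' hj).ne']
  exact this hφ

lemma norm_partialExpansion_apply_le_of_basis {e : ℕ → E} {estar : ℕ → E →L[𝕜] 𝕜}
    (hbie : ∀ i j, estar i (e j) = if i = j then 1 else 0)
    (hdense : (Submodule.span 𝕜 (Set.range e)).topologicalClosure = ⊤) {lam : ℝ}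
    (hbasis : ∀ (c : ℕ →₀ 𝕜) (N : ℕ),
      ‖∑ j ∈ c.support.filter (· < N), c j • e j‖ ≤ lam * ‖∑ j ∈ c.support, c j • e j‖)
    (N : ℕ) (y : E) : ‖partialExpansion estar e N y‖ ≤ lam * ‖y‖ := by
  refine (Submodule.dense_iff_topologicalClosure_eq_top.mpr hdense).induction
    (fun y hy => ?_) (isClosed_le (by fun_prop) (by fun_prop)) y
  obtain ⟨c, rfl⟩ := Finsupp.mem_span_range_iff_exists_finsupp.mp hy
  have htrunc : partialExpansion estar e N (c.sum fun j a => a • e j) =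
      ∑ j ∈ c.support.filter (· < N), c j • e j := by
    simp only [partialExpansion_apply, apply_finsuppSum_of_biorthogonal hbie]
    refine (Finset.sum_subset (fun j hj => ?_) fun j _ hj => ?_).symm
    · simpa using (Finset.mem_filter.mp hj).2
    · simp_all
  exact htrunc ▸ hbasis c N

lemma exists_tendsto_partialExpansion_of_mem_span {e : ℕ → E} {φ : ℕ → E →L[𝕜] 𝕜}
    (u : ℕ → E) (hφ : ∀ n j, j < n → φ n (e j) = 0) {y : E}
    (hy : y ∈ Submodule.span 𝕜 (Set.range e)) :
    ∃ z, Tendsto (fun N => partialExpansion φ u N y) atTop (𝓝 z) := by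
  obtain ⟨c, rfl⟩ := Finsupp.mem_span_range_iff_exists_finsupp.mp hy
  obtain ⟨K, hK⟩ := c.support.exists_nat_subset_range
  have hvanish : ∀ n ∉ Finset.range K, φ n (c.sum fun j a => a • e j) • u n = 0 := by
    intro n hn
    have hφc : φ n (c.sum fun j a => a • e j) = 0 := by
      refine (map_finsuppSum _ _ _).trans (Finset.sum_eq_zero fun j hj => ?_)
      have := Finset.mem_range.mp (hK hj)
      simp [hφ n j (by simp_all; omega)]
    rw [hφc, zero_smul]
  simpa using ⟨_, (hasSum_sum_of_ne_finset_zero hvanish).tendsto_sum_nat⟩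

lemma cauchySeq_apply_of_dense {F : Type*} [NormedAddCommGroup F] [NormedSpace 𝕜 F]
    {T : ℕ → E →L[𝕜] F} {K : ℝ} (hT : ∀ n, ‖T n‖ ≤ K) {D : Set E} (hD : Dense D)
    (hDc : ∀ y ∈ D, CauchySeq fun n => T n y) (x : E) : CauchySeq fun n => T n x := by
  rw [Metric.cauchySeq_iff]
  intro ε hε
  have hK : 0 ≤ K := (norm_nonneg _).trans (hT 0)
  obtain ⟨y, hyD, hxy⟩ := hD.exists_dist_lt x (show 0 < ε / (3 * (K + 1)) by positivity)
  obtain ⟨N, hN⟩ := Metric.cauchySeq_iff.mp (hDc y hyD) (ε / 3) (by positivity)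
  have hnear : ∀ n, dist (T n x) (T n y) ≤ ε / 3 := fun n => calc
    dist (T n x) (T n y) ≤ K * dist x y := by
      simpa only [dist_eq_norm, ← map_sub] using (T n).le_of_opNorm_le (hT n) (x - y)
    _ ≤ (K + 1) * (ε / (3 * (K + 1))) := by gcongr; linarith
    _ = ε / 3 := by field_simp
  refine ⟨N, fun m hm n hn => ?_⟩
  calc dist (T m x) (T n x)
      ≤ dist (T m x) (T m y) + dist (T m y) (T n y) + dist (T n y) (T n x) := dist_triangle4 ..
    _ < ε := by linarith [hnear m, hN m hm n hn, hnear n, dist_comm (T n y) (T n x)]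

lemma norm_partialExpansion_le_of_dominated {e b : ℕ → E} {estar bstar : ℕ → E →L[𝕜] 𝕜}
    {lam C : ℝ} (hlam : 0 ≤ lam) (hC : 0 ≤ C)
    (hbasis : ∀ N y, ‖partialExpansion estar e N y‖ ≤ lam * ‖y‖)
    (hCb : ∀ c : ℕ →₀ 𝕜,
      ‖∑ j ∈ c.support, c j • b j‖ ≤ √C * ‖∑ j ∈ c.support, c j • e j‖)
    (hCbstar : ∀ c : ℕ →₀ 𝕜,
      ‖∑ j ∈ c.support, c j • bstar j‖ ≤ √C * ‖∑ j ∈ c.support, c j • estar j‖) (N : ℕ) :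
    ‖partialExpansion bstar b N‖ ≤ lam * C := by
  have hmixed : ‖partialExpansion estar b N‖ ≤ √C * lam := by
    refine ContinuousLinearMap.opNorm_le_bound _ (by positivity) fun y => ?_
    calc ‖partialExpansion estar b N y‖ ≤ √C * ‖partialExpansion estar e N y‖ := by
          simpa only [partialExpansion_apply] using norm_sum_smul_le_of_finsupp hCb _ _
      _ ≤ √C * lam * ‖y‖ := by rw [mul_assoc]; gcongr; exact hbasis N y
  refine ContinuousLinearMap.opNorm_le_bound _ (by positivity) fun x =>
    NormedSpace.norm_le_dual_bound 𝕜 _ (by positivity) fun f => ?_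
  calc ‖f (partialExpansion bstar b N x)‖
      = ‖(∑ n ∈ Finset.range N, f (b n) • bstar n) x‖ := by rw [← comp_partialExpansion]; rfl
    _ ≤ ‖∑ n ∈ Finset.range N, f (b n) • bstar n‖ * ‖x‖ := ContinuousLinearMap.le_opNorm _ _
    _ ≤ √C * ‖∑ n ∈ Finset.range N, f (b n) • estar n‖ * ‖x‖ := by
      gcongr; exact norm_sum_smul_le_of_finsupp hCbstar _ _
    _ = √C * ‖f.comp (partialExpansion estar b N)‖ * ‖x‖ := by rw [comp_partialExpansion]
    _ ≤ √C * (‖f‖ * (√C * lam)) * ‖x‖ := by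
      gcongr; exact (f.opNorm_comp_le _).trans (by gcongr)
    _ = lam * C * ‖x‖ * ‖f‖ := by linear_combination (lam * ‖x‖ * ‖f‖) * Real.mul_self_sqrt hC

lemma isProj_topologicalClosure_span_of_tendsto {T : ℕ → E →L[𝕜] E} {P : E →L[𝕜] E}
    {u : ℕ → E} (hT : ∀ N x, T N x ∈ Submodule.span 𝕜 (Set.range u))
    (hlim : ∀ x, Tendsto (fun N => T N x) atTop (𝓝 (P x)))
    (hfix : ∀ n, ∀ᶠ N in atTop, T N (u n) = u n) :
    LinearMap.IsProj (Submodule.span 𝕜 (Set.range u)).topologicalClosure (P : E →ₗ[𝕜] E) where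
  map_mem x := (Submodule.isClosed_topologicalClosure _).mem_of_tendsto (hlim x)
    (Eventually.of_forall fun N => Submodule.le_topologicalClosure _ (hT N x))
  map_id := by
    have hPu : ∀ n, P (u n) = u n := fun n =>
      tendsto_nhds_unique (hlim (u n)) (tendsto_const_nhds.congr' ((hfix n).mono fun _ h => h.symm))
    refine fun y hy => Submodule.topologicalClosure_minimal _
      (t := LinearMap.eqLocus (P : E →ₗ[𝕜] E) LinearMap.id)
      (Submodule.span_le.mpr ?_) (isClosed_eq P.continuous continuous_id) hy
    rintro _ ⟨n, rfl⟩
    exact hPu n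

end Expansion

theorem stmt_6_general {X : Type*} [NormedAddCommGroup X] [NormedSpace ℝ X] [CompleteSpace X]
    (e : ℕ → X) (estar : ℕ → X →L[ℝ] ℝ)
    (hbie : ∀ i j, estar i (e j) = if i = j then 1 else 0)
    (hdense : (Submodule.span ℝ (Set.range e)).topologicalClosure = ⊤)
    (lam : ℝ) (hlam : 1 ≤ lam)
    (hbasis : ∀ (c : ℕ →₀ ℝ) (N : ℕ),
      ‖∑ j ∈ c.support.filter (· < N), c j • e j‖ ≤ lam * ‖∑ j ∈ c.support, c j • e j‖)
    (b : ℕ → X) (bstar : ℕ → X →L[ℝ] ℝ)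
    (hblockbstar : ∃ k : ℕ → ℕ, StrictMono k ∧
      ∀ n, bstar n ∈ Submodule.span ℝ (estar '' Set.Ico (k n) (k (n + 1))))
    (hbi : ∀ m n, bstar m (b n) = if m = n then 1 else 0)
    (C : ℝ) (hC : 1 ≤ C)
    (hCb : ∀ c : ℕ →₀ ℝ,
      ‖∑ j ∈ c.support, c j • b j‖ ≤ Real.sqrt C * ‖∑ j ∈ c.support, c j • e j‖)
    (hCbstar : ∀ c : ℕ →₀ ℝ,
      ‖∑ j ∈ c.support, c j • bstar j‖ ≤ Real.sqrt C * ‖∑ j ∈ c.support, c j • estar j‖) :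
    ∃ P : X →L[ℝ] X, ‖P‖ ≤ lam * C ∧ P.comp P = P ∧
      LinearMap.range (P : X →ₗ[ℝ] X) = (Submodule.span ℝ (Set.range b)).topologicalClosure ∧
      ∀ x : X, Tendsto (fun N => ∑ n ∈ Finset.range N, bstar n x • b n) atTop (𝓝 (P x)) := by
  obtain ⟨k, hk, hbstar_block⟩ := hblockbstar
  set T := partialExpansion bstar b
  have hT : ∀ N, ‖T N‖ ≤ lam * C := norm_partialExpansion_le_of_dominated (by linarith)
    (by linarith) (norm_partialExpansion_apply_le_of_basis hbie hdense hbasis) hCb hCbstar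
  have hvanish : ∀ n j, j < n → bstar n (e j) = 0 := fun n j hj =>
    apply_eq_zero_of_mem_span_Ico hbie (hj.trans_le (hk.id_le n)) (hbstar_block n)
  have hcauchy : ∀ x, CauchySeq fun N => T N x :=
    cauchySeq_apply_of_dense hT (Submodule.dense_iff_topologicalClosure_eq_top.mpr hdense)
      fun y hy =>
        let ⟨_, hlim⟩ := exists_tendsto_partialExpansion_of_mem_span b hvanish hy
        hlim.cauchySeq
  have hlim : Tendsto (fun N x => T N x) atTop (𝓝 fun x => limUnder atTop fun N => T N x) :=
    tendsto_pi_nhds.mpr fun x => (hcauchy x).tendsto_limUnder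
  let P := continuousLinearMapOfTendsto T hlim
  have hPlim : ∀ x, Tendsto (fun N => T N x) atTop (𝓝 (P x)) :=
    fun x => (hcauchy x).tendsto_limUnder
  have hproj : LinearMap.IsProj (Submodule.span ℝ (Set.range b)).topologicalClosure
      (P : X →ₗ[ℝ] X) :=
    isProj_topologicalClosure_span_of_tendsto (partialExpansion_apply_mem_span bstar b) hPlim
      fun n => eventually_gt_atTop n |>.mono fun _ => partialExpansion_apply_of_lt hbi
  refine ⟨P, ?_, ?_, hproj.range, fun x => by simpa [T] using hPlim x⟩
  · exact P.opNorm_le_bound (by nlinarith) fun x =>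
      le_of_tendsto' (hPlim x).norm fun N => (T N).le_of_opNorm_le (hT N) x
  · ext x
    exact hproj.map_id _ (hproj.map_mem x)

/-- If `(b n)`, `(b* n)` are biorthogonal block bases of a basis `(e n)` (basis
constant `λ`) and its coordinate functionals `(e* n)`, dominated by `√C` times the
respective bases, then `Y = closed span (b n)` is complemented in `X`:
`P x = ∑ b*ₙ(x) bₙ` is a well-defined bounded projection onto `Y` with `‖P‖ ≤ λC`. -/
theorem stmt_6 {X : Type*} [NormedAddCommGroup X] [NormedSpace ℝ X] [CompleteSpace X]
    (e : ℕ → X) (estar : ℕ → X →L[ℝ] ℝ)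
    (hbie : ∀ i j, estar i (e j) = if i = j then 1 else 0)
    (hdense : (Submodule.span ℝ (Set.range e)).topologicalClosure = ⊤)
    (lam : ℝ) (hlam : 1 ≤ lam)
    (hbasis : ∀ (c : ℕ →₀ ℝ) (N : ℕ),
      ‖∑ j ∈ c.support.filter (· < N), c j • e j‖ ≤ lam * ‖∑ j ∈ c.support, c j • e j‖)
    (b : ℕ → X) (bstar : ℕ → X →L[ℝ] ℝ)
    (hbne : ∀ n, b n ≠ 0) (hbstarne : ∀ n, bstar n ≠ 0)
    (hblockb : ∃ k : ℕ → ℕ, StrictMono k ∧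
      ∀ n, b n ∈ Submodule.span ℝ (e '' Set.Ico (k n) (k (n + 1))))
    (hblockbstar : ∃ k : ℕ → ℕ, StrictMono k ∧
      ∀ n, bstar n ∈ Submodule.span ℝ (estar '' Set.Ico (k n) (k (n + 1))))
    (hbi : ∀ m n, bstar m (b n) = if m = n then 1 else 0)
    (C : ℝ) (hC : 1 ≤ C)
    (hCb : ∀ c : ℕ →₀ ℝ,
      ‖∑ j ∈ c.support, c j • b j‖ ≤ Real.sqrt C * ‖∑ j ∈ c.support, c j • e j‖)
    (hCbstar : ∀ c : ℕ →₀ ℝ,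
      ‖∑ j ∈ c.support, c j • bstar j‖ ≤ Real.sqrt C * ‖∑ j ∈ c.support, c j • estar j‖) :
    ∃ P : X →L[ℝ] X, ‖P‖ ≤ lam * C ∧ P.comp P = P ∧
      LinearMap.range (P : X →ₗ[ℝ] X) = (Submodule.span ℝ (Set.range b)).topologicalClosure ∧
      ∀ x : X, Tendsto (fun N => ∑ n ∈ Finset.range N, bstar n x • b n) atTop (𝓝 (P x)) :=
  stmt_6_general e estar hbie hdense lam hlam hbasis b bstar hblockbstar hbi C hC hCb hCbstar
end

section
/- Let X be a Banach space with basis (e_n) of basis constant λ, and biorthogonal functionals (e_n*). Let (b_n), (b_n*) be block bases of (e_n) and (e_n*) respectively, with b_m*(b_n) = δ_{m,n}, and suppose for some C ≥ 1 that ‖∑ ξⱼ bⱼ‖ ≤ √C ‖∑ ξⱼ eⱼ‖ and ‖∑ ξⱼ bⱼ*‖ ≤ √C ‖∑ ξⱼ eⱼ*‖ for all (ξⱼ) ∈ c₀₀. Then for all (ξⱼ) ∈ c₀₀ one has ‖∑ ξⱼ bⱼ‖ ≥ (1/(λ√C)) ‖∑ ξⱼ eⱼ‖, so (b_n) is λC-impartially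 equivalent to (e_n). -/
/-!
Write `x = ∑ ξⱼ eⱼ`, pick `f` with `‖f‖ ≤ 1` and `f x = ‖x‖`, and `N` beyond the support of `ξ`.
The functional `∑_{j<N} f(eⱼ) eⱼ*` is `f ∘ P_N`, of norm at most `λ`, so by the upper estimate for
`(bⱼ*)` the functional `h = ∑_{j<N} f(eⱼ) bⱼ*` has norm at most `√C λ`. Biorthogonality of both
systems gives `h (∑ ξⱼ bⱼ) = ∑ ξⱼ f(eⱼ) = ‖x‖`, hence `‖x‖ ≤ √C λ ‖∑ ξⱼ bⱼ‖`.
-/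

open Finsupp

section Biorthogonal

variable {𝕜 E ι : Type*} [NontriviallyNormedField 𝕜] [NormedAddCommGroup E] [NormedSpace 𝕜 E]
  [DecidableEq ι] {u : ι → E} {φ : ι → E →L[𝕜] 𝕜}

theorem apply_linearCombination_of_biorthogonal
    (hφu : ∀ i j, φ i (u j) = if i = j then 1 else 0) (c : ι →₀ 𝕜) (i : ι) :
    φ i (linearCombination 𝕜 u c) = c i := by
  simp [linearCombination_apply, map_finsuppSum, hφu]

theorem linearCombination_apply_linearCombination_of_biorthogonal
    (hφu : ∀ i j, φ i (u j) = if i = j then 1 else 0) (d c : ι →₀ 𝕜) :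
    linearCombination 𝕜 φ d (linearCombination 𝕜 u c) = ∑ j ∈ d.support, d j * c j := by
  rw [linearCombination_apply (l := d), Finsupp.sum, _root_.sum_apply]
  simp [apply_linearCombination_of_biorthogonal hφu]

end Biorthogonal

section PartialSum

variable {𝕜 X : Type*} [NontriviallyNormedField 𝕜] [NormedAddCommGroup X] [NormedSpace 𝕜 X]
  {e : ℕ → X} {estar : ℕ → X →L[𝕜] 𝕜}

def partialSumProj (e : ℕ → X) (estar : ℕ → X →L[𝕜] 𝕜) (N : ℕ) : X →L[𝕜] X :=
  ∑ j ∈ Finset.range N, (estar j).smulRight (e j)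

theorem partialSumProj_apply (N : ℕ) (z : X) :
    partialSumProj e estar N z = ∑ j ∈ Finset.range N, estar j z • e j := by
  simp [partialSumProj]

theorem partialSumProj_linearCombination (hbie : ∀ i j, estar i (e j) = if i = j then 1 else 0)
    (N : ℕ) (c : ℕ →₀ 𝕜) :
    partialSumProj e estar N (linearCombination 𝕜 e c) =
      linearCombination 𝕜 e (c.filter (· < N)) := by
  rw [partialSumProj_apply, linearCombination_apply (l := c.filter _), sum_filter_index]
  simp only [apply_linearCombination_of_biorthogonal hbie, support_filter]
  refine (Finset.sum_subset (fun j hj => ?_) fun j _ hj => ?_).symm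
  · simpa using (Finset.mem_filter.1 hj).2
  · simp_all

theorem norm_partialSumProj_le (hbie : ∀ i j, estar i (e j) = if i = j then 1 else 0)
    (hdense : Dense (Submodule.span 𝕜 (Set.range e) : Set X)) {lam : ℝ} (hlam : 0 ≤ lam)
    (hbasis : ∀ (c : ℕ →₀ 𝕜) (N : ℕ),
      ‖linearCombination 𝕜 e (c.filter (· < N))‖ ≤ lam * ‖linearCombination 𝕜 e c‖)
    (N : ℕ) : ‖partialSumProj e estar N‖ ≤ lam := by
  refine ContinuousLinearMap.opNorm_le_bound _ hlam fun z => hdense.induction ?_ ?_ z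
  · intro x hx
    rw [SetLike.mem_coe, ← range_linearCombination] at hx
    obtain ⟨c, rfl⟩ := hx
    simpa [partialSumProj_linearCombination hbie] using hbasis c N
  · exact isClosed_le (partialSumProj e estar N).continuous.norm (continuous_norm.const_mul lam)

end PartialSum

section LowerEstimate

variable {𝕜 X : Type*} [RCLike 𝕜] [NormedAddCommGroup X] [NormedSpace 𝕜 X]
  {e b : ℕ → X} {estar bstar : ℕ → X →L[𝕜] 𝕜}

theorem norm_linearCombination_le_of_dual_upper_estimate
    (hbie : ∀ i j, estar i (e j) = if i = j then 1 else 0)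
    (hdense : Dense (Submodule.span 𝕜 (Set.range e) : Set X)) {lam : ℝ} (hlam : 0 ≤ lam)
    (hbasis : ∀ (c : ℕ →₀ 𝕜) (N : ℕ),
      ‖linearCombination 𝕜 e (c.filter (· < N))‖ ≤ lam * ‖linearCombination 𝕜 e c‖)
    (hbi : ∀ m n, bstar m (b n) = if m = n then 1 else 0) {K : ℝ} (hK : 0 ≤ K)
    (hKbstar : ∀ d : ℕ →₀ 𝕜,
      ‖linearCombination 𝕜 bstar d‖ ≤ K * ‖linearCombination 𝕜 estar d‖)
    (c : ℕ →₀ 𝕜) :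
    ‖linearCombination 𝕜 e c‖ ≤ K * lam * ‖linearCombination 𝕜 b c‖ := by
  set x := linearCombination 𝕜 e c
  set y := linearCombination 𝕜 b c
  obtain ⟨f, hf, hfx⟩ := exists_dual_vector'' 𝕜 x
  obtain ⟨N, hN⟩ := c.support.exists_nat_subset_range
  set d : ℕ →₀ 𝕜 := ∑ j ∈ Finset.range N, single j (f (e j))
  have hd : linearCombination 𝕜 estar d = f.comp (partialSumProj e estar N) := by
    ext z
    simp [d, map_sum, partialSumProj_apply, mul_comm]
  have hPx : partialSumProj e estar N x = x := by
    rw [partialSumProj_linearCombination hbie, (filter_eq_self_iff _ c).2]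
    exact fun j hj => Finset.mem_range.1 (hN (mem_support_iff.2 hj))
  have hdy : linearCombination 𝕜 bstar d y = f x := by
    rw [linearCombination_apply_linearCombination_of_biorthogonal hbi,
      ← linearCombination_apply_linearCombination_of_biorthogonal hbie, hd,
      ContinuousLinearMap.comp_apply, hPx]
  have hdnorm : ‖linearCombination 𝕜 estar d‖ ≤ lam := by
    rw [hd]
    calc ‖f.comp (partialSumProj e estar N)‖ ≤ ‖f‖ * ‖partialSumProj e estar N‖ :=
          f.opNorm_comp_le _
      _ ≤ 1 * lam := by
          gcongr
          exact norm_partialSumProj_le hbie hdense hlam hbasis N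
      _ = lam := one_mul lam
  calc ‖x‖ = ‖linearCombination 𝕜 bstar d y‖ := by rw [hdy, hfx, RCLike.norm_ofReal, abs_norm]
    _ ≤ ‖linearCombination 𝕜 bstar d‖ * ‖y‖ := ContinuousLinearMap.le_opNorm _ _
    _ ≤ K * lam * ‖y‖ := by
        gcongr
        exact (hKbstar d).trans (by gcongr)

end LowerEstimate

theorem stmt_7_general {X : Type*} [NormedAddCommGroup X] [NormedSpace ℝ X]
    (e : ℕ → X) (estar : ℕ → X →L[ℝ] ℝ)
    (hbie : ∀ i j, estar i (e j) = if i = j then 1 else 0)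
    (hdense : (Submodule.span ℝ (Set.range e)).topologicalClosure = ⊤)
    (lam : ℝ) (hlam : 1 ≤ lam)
    (hbasis : ∀ (c : ℕ →₀ ℝ) (N : ℕ),
      ‖∑ j ∈ c.support.filter (· < N), c j • e j‖ ≤ lam * ‖∑ j ∈ c.support, c j • e j‖)
    (b : ℕ → X) (bstar : ℕ → X →L[ℝ] ℝ)
    (hbi : ∀ m n, bstar m (b n) = if m = n then 1 else 0)
    (C : ℝ) (hC : 1 ≤ C)
    (hCbstar : ∀ c : ℕ →₀ ℝ,
      ‖∑ j ∈ c.support, c j • bstar j‖ ≤ Real.sqrt C * ‖∑ j ∈ c.support, c j • estar j‖) :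
    ∀ c : ℕ →₀ ℝ,
      (1 / (lam * Real.sqrt C)) * ‖∑ j ∈ c.support, c j • e j‖ ≤
        ‖∑ j ∈ c.support, c j • b j‖ := by
  have hproj (c : ℕ →₀ ℝ) (N : ℕ) :
      ‖linearCombination ℝ e (c.filter (· < N))‖ ≤ lam * ‖linearCombination ℝ e c‖ := by
    rw [linearCombination_apply, sum_filter_index]
    exact hbasis c N
  intro c
  have key := norm_linearCombination_le_of_dual_upper_estimate hbie
    (Submodule.dense_iff_topologicalClosure_eq_top.2 hdense) (by linarith) hproj hbi
    (Real.sqrt_nonneg C) hCbstar c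
  have hpos : 0 < lam * Real.sqrt C := by positivity
  rw [one_div, inv_mul_le_iff₀ hpos, mul_comm lam]
  exact key

/-- Lower estimate for block bases: under the hypotheses of the projection lemma, for
all finitely supported scalars `(ξ j)` one has
`‖∑ ξⱼ bⱼ‖ ≥ (1/(λ√C)) ‖∑ ξⱼ eⱼ‖`, so `(b n)` is `λC`-impartially equivalent to `(e n)`. -/
theorem stmt_7 {X : Type*} [NormedAddCommGroup X] [NormedSpace ℝ X] [CompleteSpace X]
    (e : ℕ → X) (estar : ℕ → X →L[ℝ] ℝ)
    (hbie : ∀ i j, estar i (e j) = if i = j then 1 else 0)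
    (hdense : (Submodule.span ℝ (Set.range e)).topologicalClosure = ⊤)
    (lam : ℝ) (hlam : 1 ≤ lam)
    (hbasis : ∀ (c : ℕ →₀ ℝ) (N : ℕ),
      ‖∑ j ∈ c.support.filter (· < N), c j • e j‖ ≤ lam * ‖∑ j ∈ c.support, c j • e j‖)
    (b : ℕ → X) (bstar : ℕ → X →L[ℝ] ℝ)
    (hbne : ∀ n, b n ≠ 0) (hbstarne : ∀ n, bstar n ≠ 0)
    (hblockb : ∃ k : ℕ → ℕ, StrictMono k ∧
      ∀ n, b n ∈ Submodule.span ℝ (e '' Set.Ico (k n) (k (n + 1))))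
    (hblockbstar : ∃ k : ℕ → ℕ, StrictMono k ∧
      ∀ n, bstar n ∈ Submodule.span ℝ (estar '' Set.Ico (k n) (k (n + 1))))
    (hbi : ∀ m n, bstar m (b n) = if m = n then 1 else 0)
    (C : ℝ) (hC : 1 ≤ C)
    (hCb : ∀ c : ℕ →₀ ℝ,
      ‖∑ j ∈ c.support, c j • b j‖ ≤ Real.sqrt C * ‖∑ j ∈ c.support, c j • e j‖)
    (hCbstar : ∀ c : ℕ →₀ ℝ,
      ‖∑ j ∈ c.support, c j • bstar j‖ ≤ Real.sqrt C * ‖∑ j ∈ c.support, c j • estar j‖) :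
    ∀ c : ℕ →₀ ℝ,
      (1 / (lam * Real.sqrt C)) * ‖∑ j ∈ c.support, c j • e j‖ ≤
        ‖∑ j ∈ c.support, c j • b j‖ :=
  stmt_7_general e estar hbie hdense lam hlam hbasis b bstar hbi C hC hCbstar
end

section
/- Suppose a normalized Schauder basis (e_n) of a Banach space X has the K(δ)-factorization property, i.e., for every bounded operator T with inf_n |e_n*(T e_n)| ≥ δ the identity almost K(δ)-factors through T. Then for 0 < ε < δ one has K(δ) ≤ K(δ−ε) ≤ (δ/(δ−ε)) K(δ); consequently K is continuous on (0,∞) and 1/δ ≤ K(δ) ≤ K(1)/δ for all 0 < δ ≤ 1. -/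
/-- `FactProp e estar Kc δ` : every bounded operator `T` with diagonal entries
`|e*ₙ(T eₙ)| ≥ δ` admits, for each `ε > 0`, a factorization `I = S T R` with
`‖R‖·‖S‖ ≤ Kc + ε` (the identity almost `Kc`-factors through `T`). -/
def FactProp {X : Type*} [NormedAddCommGroup X] [NormedSpace ℝ X]
    (e : ℕ → X) (estar : ℕ → X →L[ℝ] ℝ) (Kc δ : ℝ) : Prop :=
  ∀ T : X →L[ℝ] X, (∀ n, δ ≤ |estar n (T (e n))|) →
    ∀ ε > (0 : ℝ), ∃ R S : X →L[ℝ] X, ‖R‖ * ‖S‖ ≤ Kc + ε ∧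
      S.comp (T.comp R) = ContinuousLinearMap.id ℝ X

/-- If `K δ` is the optimal constant in the `K(δ)`-factorization property of a
normalized basis, then for `0 < ε < δ`, `K(δ) ≤ K(δ−ε) ≤ (δ/(δ−ε)) K(δ)`;
consequently `K` is continuous on `(0,∞)` and `1/δ ≤ K(δ) ≤ K(1)/δ` for all `δ > 0`. -/
theorem stmt_9 {X : Type*} [NormedAddCommGroup X] [NormedSpace ℝ X] [CompleteSpace X]
    [Nontrivial X]
    (e : ℕ → X) (estar : ℕ → X →L[ℝ] ℝ)
    (hbie : ∀ i j, estar i (e j) = if i = j then 1 else 0)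
    (hnorm : ∀ n, ‖e n‖ = 1)
    (K : ℝ → ℝ)
    (hKfac : ∀ δ > (0 : ℝ), FactProp e estar (K δ) δ)
    (hKopt : ∀ δ > (0 : ℝ), ∀ K' : ℝ, FactProp e estar K' δ → K δ ≤ K') :
    (∀ δ ε : ℝ, 0 < ε → ε < δ →
      K δ ≤ K (δ - ε) ∧ K (δ - ε) ≤ (δ / (δ - ε)) * K δ) ∧
    ContinuousOn K (Set.Ioi 0) ∧
    (∀ δ : ℝ, 0 < δ → 1 / δ ≤ K δ ∧ K δ ≤ K 1 / δ) := by
  -- K is antitone on (0,∞)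
  have hanti : ∀ a b : ℝ, 0 < a → a ≤ b → K b ≤ K a := by
    intro a b ha hab
    refine hKopt b (lt_of_lt_of_le ha hab) (K a) ?_
    intro T hT ε hε
    exact hKfac a ha T (fun n => le_trans (hab.trans (hT n)) le_rfl) ε hε
  -- scaling: K a ≤ (b/a) * K b for a, b > 0
  have hscale : ∀ a b : ℝ, 0 < a → 0 < b → K a ≤ (b / a) * K b := by
    intro a b ha hb
    have hba : 0 < b / a := div_pos hb ha
    refine hKopt a ha _ ?_
    intro T hT ε hε
    obtain ⟨R, S, hRS, hfac⟩ := hKfac b hb ((b / a) • T)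
      (fun n => by
        rw [ContinuousLinearMap.smul_apply, map_smul, smul_eq_mul, abs_mul,
          abs_of_pos hba]
        calc b = (b / a) * a := by field_simp
          _ ≤ (b / a) * |estar n (T (e n))| :=
              mul_le_mul_of_nonneg_left (hT n) hba.le)
      (ε * a / b) (by positivity)
    refine ⟨R, (b / a) • S, ?_, ?_⟩
    · have hns : ‖(b / a) • S‖ = (b / a) * ‖S‖ :=
        (norm_smul (b / a) S).trans (by rw [Real.norm_eq_abs, abs_of_pos hba])
      rw [hns]
      have key : (b / a) * (ε * a / b) = ε := by field_simp
      calc ‖R‖ * (b / a * ‖S‖) = (b / a) * (‖R‖ * ‖S‖) := by ring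
        _ ≤ (b / a) * (K b + ε * a / b) := mul_le_mul_of_nonneg_left hRS hba.le
        _ = (b / a) * K b + ε := by rw [mul_add, key]
    · have hcomp : ((b / a) • S).comp (T.comp R)
          = S.comp (((b / a) • T).comp R) := by
        ext x; simp
      rw [hcomp, hfac]
  -- lower bound 1/δ ≤ K δ
  have hlow : ∀ δ : ℝ, 0 < δ → 1 / δ ≤ K δ := by
    intro δ hδ
    have key : ∀ ε > (0 : ℝ), 1 / δ ≤ K δ + ε := by
      intro ε hε
      obtain ⟨R, S, hRS, hfac⟩ := hKfac δ hδ (δ • ContinuousLinearMap.id ℝ X)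
        (fun n => by simp [hbie n n, abs_of_pos hδ]) ε hε
      have hid : S.comp ((δ • ContinuousLinearMap.id ℝ X).comp R)
          = δ • S.comp R := by ext x; simp
      have h1 : (1 : ℝ) = δ * ‖S.comp R‖ := by
        have := hfac
        rw [hid] at this
        calc (1 : ℝ) = ‖ContinuousLinearMap.id ℝ X‖ :=
              (ContinuousLinearMap.norm_id (𝕜 := ℝ) (E := X)).symm
          _ = ‖δ • S.comp R‖ := by rw [this]
          _ = δ * ‖S.comp R‖ :=
              (norm_smul δ (S.comp R)).trans
                (by rw [Real.norm_eq_abs, abs_of_pos hδ])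
      have h2 : (1 : ℝ) ≤ δ * (K δ + ε) := by
        rw [h1]
        refine mul_le_mul_of_nonneg_left ?_ hδ.le
        calc ‖S.comp R‖ ≤ ‖S‖ * ‖R‖ := S.opNorm_comp_le R
          _ = ‖R‖ * ‖S‖ := by ring
          _ ≤ K δ + ε := hRS
      rw [div_le_iff₀ hδ]
      linarith [h2]
    exact le_of_forall_pos_le_add key
  -- K x = K 1 / x on (0,∞)
  have heq : Set.EqOn K (fun x => K 1 / x) (Set.Ioi 0) := by
    intro x hx
    have hx' : (0 : ℝ) < x := hx
    have h1 : K x ≤ K 1 / x := by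
      have := hscale x 1 hx' one_pos
      calc K x ≤ (1 / x) * K 1 := this
        _ = K 1 / x := by ring
    have h2 : K 1 / x ≤ K x := by
      have := hscale 1 x one_pos hx'
      rw [div_le_iff₀ hx']
      calc K 1 ≤ (x / 1) * K x := this
        _ = K x * x := by ring
    exact le_antisymm h1 h2
  refine ⟨?_, ?_, ?_⟩
  · intro δ ε hε hεδ
    have hδε : (0 : ℝ) < δ - ε := by linarith
    exact ⟨hanti (δ - ε) δ hδε (by linarith), hscale (δ - ε) δ hδε (by linarith)⟩
  · exact ContinuousOn.congr
      (continuousOn_const.div continuousOn_id (fun x hx => ne_of_gt hx)) heq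
  · intro δ hδ
    exact ⟨hlow δ hδ, le_of_eq (heq hδ)⟩
end

section
/- Let A ⊆ D be a collection of dyadic intervals. Then for every κ > 0 there exists Ã ⊆ A such that for each k, the k-th generation G_k(Ã) is finite and contained in G_k(A), and |limsup(Ã)| ≥ |limsup(A)| − κ. -/
/-!
Choose `Ã` generation by generation. Its `n`-th generation is a finite subfamily of
those intervals of `𝒢ₙ(A)` that lie inside a previously chosen interval, large enough that the
part of their union it misses has measure at most `δₙ`, where `∑ δₙ < κ`. By construction the
chosen families form a tree, so they are exactly the generations of their union `Ã`. A point of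
`limsup(A)` that is not in `limsup(Ã)` first escapes the chosen families at some stage `n`; since
dyadic intervals are nested or disjoint, it then lies in one of the missed parts of stage `n`.
-/

open MeasureTheory Set

/-- Index set for dyadic intervals: `(j, i)` with `1 ≤ i ≤ 2^j` encodes
`[(i-1)/2^j, i/2^j) ⊆ [0,1)`. -/
def DIdx : Set (ℕ × ℕ) := {p | 1 ≤ p.2 ∧ p.2 ≤ 2 ^ p.1}

/-- The dyadic interval `[(i-1)/2^j, i/2^j)` encoded by `p = (j, i)`. -/
def dIco (p : ℕ × ℕ) : Set ℝ :=
  Set.Ico (((p.2 : ℝ) - 1) / 2 ^ p.1) ((p.2 : ℝ) / 2 ^ p.1)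

/-- Maximal elements (with respect to inclusion of the associated intervals)
of a collection of dyadic intervals. -/
def maxElems (A : Set (ℕ × ℕ)) : Set (ℕ × ℕ) :=
  {I | I ∈ A ∧ ∀ J ∈ A, dIco I ⊆ dIco J → I = J}

/-- Auxiliary recursion: the `n`-th generation and the remainder after removing
generations `0, …, n`. -/
def genAux (A : Set (ℕ × ℕ)) : ℕ → Set (ℕ × ℕ) × Set (ℕ × ℕ)
  | 0 => (maxElems A, A \ maxElems A)
  | n + 1 => (maxElems (genAux A n).2, (genAux A n).2 \ maxElems (genAux A n).2)

/-- `gen A n = 𝒢ₙ(A)`, the `n`-th generation of `A`: maximal elements of `A` after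
removal of the earlier generations. -/
def gen (A : Set (ℕ × ℕ)) (n : ℕ) : Set (ℕ × ℕ) := (genAux A n).1

/-- `𝒢ₙ(A)* = ⋃ 𝒢ₙ(A)`, the pointset of the `n`-th generation. -/
def genStar (A : Set (ℕ × ℕ)) (n : ℕ) : Set ℝ := ⋃ I ∈ gen A n, dIco I

/-- `limsup A = ⋂ₙ 𝒢ₙ(A)*`. -/
def limsupSet (A : Set (ℕ × ℕ)) : Set ℝ := ⋂ n, genStar A n

open scoped ENNReal

lemma mem_dIco_iff {p : ℕ × ℕ} {x : ℝ} : x ∈ dIco p ↔ ⌊x * 2 ^ p.1⌋ = (p.2 : ℤ) - 1 := by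
  simp only [dIco, mem_Ico, Int.floor_eq_iff, div_le_iff₀ (by positivity : (0:ℝ) < 2 ^ p.1),
    lt_div_iff₀ (by positivity : (0:ℝ) < 2 ^ p.1)]
  push_cast
  ring_nf

lemma floor_mul_two_pow_eq_of_le {j j' : ℕ} (hj : j ≤ j') {x y : ℝ}
    (h : ⌊x * 2 ^ j'⌋ = ⌊y * 2 ^ j'⌋) : ⌊x * 2 ^ j⌋ = ⌊y * 2 ^ j⌋ := by
  have key (z : ℝ) : ⌊z * 2 ^ j⌋ = ⌊z * 2 ^ j'⌋ / (2 ^ (j' - j) : ℕ) := by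
    rw [← Int.floor_div_natCast, ← Nat.sub_add_cancel hj, Nat.add_sub_cancel, pow_add]
    push_cast
    rw [mul_left_comm, mul_div_cancel_left₀ _ (by positivity)]
  rw [key x, key y, h]

lemma dIco_subset_of_le {p q : ℕ × ℕ} (hpq : p.1 ≤ q.1) (h : (dIco p ∩ dIco q).Nonempty) :
    dIco q ⊆ dIco p := by
  obtain ⟨x, hxp, hxq⟩ := h
  intro y hy
  rw [mem_dIco_iff] at hxp hxq hy ⊢
  rw [← hxp]
  exact floor_mul_two_pow_eq_of_le hpq (hy.trans hxq.symm)

lemma dIco_nonempty (p : ℕ × ℕ) : (dIco p).Nonempty :=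
  nonempty_Ico.2 (by gcongr; linarith)

lemma dIco_subset_Ico_zero_one {p : ℕ × ℕ} (hp : p ∈ DIdx) : dIco p ⊆ Ico 0 1 := by
  have h2 : (0:ℝ) < 2 ^ p.1 := by positivity
  refine Ico_subset_Ico (div_nonneg ?_ h2.le) ((div_le_one h2).2 (by exact_mod_cast hp.2))
  simpa using (Nat.one_le_cast (α := ℝ)).2 hp.1

/-- `dUnion C` is the point set `C*` of a collection `C` of dyadic intervals. -/
def dUnion (C : Set (ℕ × ℕ)) : Set ℝ := ⋃ I ∈ C, dIco I

lemma dUnion_subset_Ico_zero_one {C : Set (ℕ × ℕ)} (hC : C ⊆ DIdx) : dUnion C ⊆ Ico 0 1 :=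
  iUnion₂_subset fun _ hI => dIco_subset_Ico_zero_one (hC hI)

def genRem (A : Set (ℕ × ℕ)) : ℕ → Set (ℕ × ℕ)
  | 0 => A
  | n + 1 => genRem A n \ maxElems (genRem A n)

section Generations

variable {A : Set (ℕ × ℕ)}

lemma genAux_eq (A : Set (ℕ × ℕ)) (n : ℕ) :
    genAux A n = (maxElems (genRem A n), genRem A (n + 1)) := by
  induction n with
  | zero => rfl
  | succ n ih => simp [genAux, ih, genRem]

lemma gen_eq_maxElems_genRem (A : Set (ℕ × ℕ)) (n : ℕ) : gen A n = maxElems (genRem A n) := by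
  rw [gen, genAux_eq]

lemma genRem_antitone (A : Set (ℕ × ℕ)) : Antitone (genRem A) :=
  antitone_nat_of_succ_le fun _ => sdiff_subset

lemma gen_subset_genRem (A : Set (ℕ × ℕ)) (n : ℕ) : gen A n ⊆ genRem A n := by
  rw [gen_eq_maxElems_genRem]
  exact fun _ hI => hI.1

lemma gen_subset (A : Set (ℕ × ℕ)) (n : ℕ) : gen A n ⊆ A :=
  (gen_subset_genRem A n).trans (genRem_antitone A (Nat.zero_le n))

lemma le_of_mem_gen_of_dIco_subset {I J : ℕ × ℕ} {n m : ℕ} (hI : I ∈ gen A n)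
    (hJ : J ∈ gen A m) (h : dIco I ⊆ dIco J) : m ≤ n := by
  by_contra! hnm
  have hJ' : J ∈ genRem A (n + 1) := genRem_antitone A hnm (gen_subset_genRem A m hJ)
  rw [gen_eq_maxElems_genRem] at hI
  obtain rfl : I = J := hI.2 J (genRem_antitone A n.le_succ hJ') h
  exact hJ'.2 hI

lemma eq_of_mem_gen_of_mem_gen {I : ℕ × ℕ} {n m : ℕ} (hn : I ∈ gen A n) (hm : I ∈ gen A m) :
    n = m :=
  le_antisymm (le_of_mem_gen_of_dIco_subset hm hn subset_rfl)
    (le_of_mem_gen_of_dIco_subset hn hm subset_rfl)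

lemma eq_of_mem_gen_of_dIco_subset {I J : ℕ × ℕ} {n : ℕ} (hI : I ∈ gen A n) (hJ : J ∈ gen A n)
    (h : dIco I ⊆ dIco J) : I = J := by
  rw [gen_eq_maxElems_genRem] at hI
  exact hI.2 J (gen_subset_genRem A n hJ) h

lemma dIco_subset_of_mem_gen {I J : ℕ × ℕ} {n m : ℕ} {x : ℝ} (hI : I ∈ gen A m)
    (hJ : J ∈ gen A n) (hnm : n ≤ m) (hxI : x ∈ dIco I) (hxJ : x ∈ dIco J) :
    dIco I ⊆ dIco J := by
  rcases le_total J.1 I.1 with h | h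
  · exact dIco_subset_of_le h ⟨x, hxJ, hxI⟩
  · have hJI := dIco_subset_of_le h ⟨x, hxI, hxJ⟩
    obtain rfl : m = n := le_antisymm (le_of_mem_gen_of_dIco_subset hJ hI hJI) hnm
    rw [eq_of_mem_gen_of_dIco_subset hJ hI hJI]

end Generations

section Tree

variable {A : Set (ℕ × ℕ)} {F : ℕ → Set (ℕ × ℕ)} (hF : ∀ n, F n ⊆ gen A n)
  (hnest : ∀ n, ∀ I ∈ F (n + 1), ∃ J ∈ F n, dIco I ⊆ dIco J)
include hF hnest

lemma maxElems_iUnion_ge (n : ℕ) : maxElems (⋃ m ≥ n, F m) = F n := by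
  have hanc : ∀ m ≥ n, ∀ I ∈ F m, ∃ J ∈ F n, dIco I ⊆ dIco J := by
    intro m hm
    induction m, hm using Nat.le_induction with
    | base => exact fun I hI => ⟨I, hI, subset_rfl⟩
    | succ m _ ih =>
      intro I hI
      obtain ⟨J, hJ, hIJ⟩ := hnest m I hI
      obtain ⟨K, hK, hJK⟩ := ih J hJ
      exact ⟨K, hK, hIJ.trans hJK⟩
  ext I
  simp only [maxElems, mem_iUnion₂, mem_ofPred_eq]
  constructor
  · rintro ⟨⟨m, hm, hIm⟩, hmax⟩
    obtain ⟨J, hJ, hIJ⟩ := hanc m hm I hIm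
    rwa [hmax J ⟨n, le_rfl, hJ⟩ hIJ]
  · intro hI
    refine ⟨⟨n, le_rfl, hI⟩, fun J ⟨m, hm, hJ⟩ hIJ => ?_⟩
    obtain rfl : m = n := le_antisymm (le_of_mem_gen_of_dIco_subset (hF n hI) (hF m hJ) hIJ) hm
    exact eq_of_mem_gen_of_dIco_subset (hF m hI) (hF m hJ) hIJ

lemma genRem_iUnion (n : ℕ) : genRem (⋃ m, F m) n = ⋃ m ≥ n, F m := by
  induction n with
  | zero => simp [genRem]
  | succ n ih =>
    rw [genRem, ih, maxElems_iUnion_ge hF hnest]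
    ext I
    simp only [mem_sdiff, mem_iUnion₂]
    constructor
    · rintro ⟨⟨m, hm, hI⟩, hIn⟩
      exact ⟨m, lt_of_le_of_ne hm fun h => hIn (h ▸ hI), hI⟩
    · rintro ⟨m, hm, hI⟩
      exact ⟨⟨m, by omega, hI⟩, fun hIn => by
        have := eq_of_mem_gen_of_mem_gen (hF m hI) (hF n hIn); omega⟩

lemma gen_iUnion (n : ℕ) : gen (⋃ m, F m) n = F n := by
  rw [gen_eq_maxElems_genRem, genRem_iUnion hF hnest, maxElems_iUnion_ge hF hnest]

end Tree

theorem exists_finite_measure_biUnion_diff_lt {α ι : Type*} [MeasurableSpace α] [Countable ι]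
    {μ : Measure α} {f : ι → Set α} (hf : ∀ i, NullMeasurableSet (f i) μ) {C : Set ι}
    (hC : μ (⋃ i ∈ C, f i) ≠ ∞) {ε : ℝ≥0∞} (hε : 0 < ε) :
    ∃ F ⊆ C, F.Finite ∧ μ ((⋃ i ∈ C, f i) \ ⋃ i ∈ F, f i) < ε := by
  classical
  set U := ⋃ i ∈ C, f i
  let s : Finset ι → Set α := fun t => U \ ⋃ i ∈ C ∩ ↑t, f i
  have hs_anti : Antitone s := fun t t' h =>
    sdiff_subset_sdiff_right (biUnion_subset_biUnion_left (inter_subset_inter_right _ h))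
  have hs_empty : ⋂ t, s t = ∅ := by
    refine eq_empty_of_forall_notMem fun x hx => ?_
    obtain ⟨i, hi, hxi⟩ := mem_iUnion₂.1 (mem_iInter.1 hx ∅).1
    exact (mem_iInter.1 hx {i}).2 (mem_iUnion₂.2 ⟨i, ⟨hi, by simp⟩, hxi⟩)
  have hs_meas (t : Finset ι) : NullMeasurableSet (s t) μ :=
    (NullMeasurableSet.biUnion C.to_countable fun i _ => hf i).diff
      (.biUnion (C ∩ ↑t).to_countable fun i _ => hf i)
  have hinf : ⨅ t, μ (s t) = 0 := by
    rw [← Directed.measure_iInter hs_meas hs_anti.directed_ge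
      ⟨∅, ne_top_of_le_ne_top hC (measure_mono sdiff_subset)⟩, hs_empty, measure_empty]
  obtain ⟨t, ht⟩ := iInf_lt_iff.1 (hinf ▸ hε)
  exact ⟨C ∩ ↑t, inter_subset_left, t.finite_toSet.inter_of_right C, ht⟩

lemma exists_finite_selection {δ : ℕ → ℝ≥0∞} (hδ : ∀ n, 0 < δ n) :
    ∃ sel : ℕ → Set (ℕ × ℕ) → Set (ℕ × ℕ), (∀ n C, sel n C ⊆ C) ∧ (∀ n C, (sel n C).Finite) ∧
      ∀ n, ∀ C ⊆ DIdx, volume (dUnion C \ dUnion (sel n C)) ≤ δ n := by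
  have (n : ℕ) (C : Set (ℕ × ℕ)) :
      ∃ F ⊆ C, F.Finite ∧ (C ⊆ DIdx → volume (dUnion C \ dUnion F) ≤ δ n) := by
    by_cases hC : C ⊆ DIdx
    · have hfin : volume (dUnion C) ≠ ∞ :=
        ne_top_of_le_ne_top (by simp) (measure_mono (dUnion_subset_Ico_zero_one hC))
      obtain ⟨F, hFC, hF, hvol⟩ := exists_finite_measure_biUnion_diff_lt
        (fun _ => measurableSet_Ico.nullMeasurableSet) hfin (hδ n)
      exact ⟨F, hFC, hF, fun _ => hvol.le⟩
    · exact ⟨∅, empty_subset C, finite_empty, fun h => absurd h hC⟩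
  choose sel hsel_sub hsel_fin hsel_vol using this
  exact ⟨sel, hsel_sub, hsel_fin, fun n C hC => hsel_vol n C hC⟩

def candidates (A : Set (ℕ × ℕ)) (sel : ℕ → Set (ℕ × ℕ) → Set (ℕ × ℕ)) : ℕ → Set (ℕ × ℕ)
  | 0 => gen A 0
  | n + 1 => {I | I ∈ gen A (n + 1) ∧ dIco I ⊆ dUnion (sel n (candidates A sel n))}

def selected (A : Set (ℕ × ℕ)) (sel : ℕ → Set (ℕ × ℕ) → Set (ℕ × ℕ)) (n : ℕ) :
    Set (ℕ × ℕ) :=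
  sel n (candidates A sel n)

section Selection

variable {A : Set (ℕ × ℕ)} {sel : ℕ → Set (ℕ × ℕ) → Set (ℕ × ℕ)}

lemma candidates_subset_gen (n : ℕ) : candidates A sel n ⊆ gen A n := by
  cases n
  · exact subset_rfl
  · exact fun _ hI => hI.1

variable (hsel : ∀ n C, sel n C ⊆ C)
include hsel

lemma selected_subset_gen (n : ℕ) : selected A sel n ⊆ gen A n :=
  (hsel n _).trans (candidates_subset_gen n)

lemma selected_nested (n : ℕ) :
    ∀ I ∈ selected A sel (n + 1), ∃ J ∈ selected A sel n, dIco I ⊆ dIco J := by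
  intro I hI
  obtain ⟨hIgen, hIsub⟩ : I ∈ candidates A sel (n + 1) := hsel _ _ hI
  obtain ⟨x, hx⟩ := dIco_nonempty I
  obtain ⟨J, hJ, hxJ⟩ := mem_iUnion₂.1 (hIsub hx)
  exact ⟨J, hJ, dIco_subset_of_mem_gen hIgen (selected_subset_gen hsel n hJ) n.le_succ hx hxJ⟩

lemma mem_dUnion_candidates_succ {x : ℝ} {n : ℕ} (hxA : x ∈ genStar A (n + 1))
    (hx : x ∈ dUnion (selected A sel n)) : x ∈ dUnion (candidates A sel (n + 1)) := by
  obtain ⟨I, hI, hxI⟩ := mem_iUnion₂.1 hxA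
  obtain ⟨J, hJ, hxJ⟩ := mem_iUnion₂.1 hx
  have hIJ := dIco_subset_of_mem_gen hI (selected_subset_gen hsel n hJ) n.le_succ hxI hxJ
  exact mem_iUnion₂.2 ⟨I, ⟨hI, hIJ.trans (subset_biUnion_of_mem hJ)⟩, hxI⟩

lemma limsupSet_subset :
    limsupSet A ⊆ (⋂ n, dUnion (selected A sel n)) ∪
      ⋃ n, dUnion (candidates A sel n) \ dUnion (selected A sel n) := by
  intro x hx
  refine or_iff_not_imp_right.2 fun hxE => ?_
  simp only [mem_iUnion, mem_sdiff, not_exists, not_and, not_not] at hxE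
  have hcand (n : ℕ) : x ∈ dUnion (candidates A sel n) := by
    induction n with
    | zero => exact mem_iInter.1 hx 0
    | succ n ih => exact mem_dUnion_candidates_succ hsel (mem_iInter.1 hx (n + 1)) (hxE n ih)
  exact mem_iInter.2 fun n => hxE n (hcand n)

end Selection

/-- For every `A ⊆ D` and `κ > 0` there is `Ã ⊆ A` whose generations are finite and
contained in those of `A`, and `|limsup(Ã)| ≥ |limsup(A)| − κ`. -/
theorem stmt_11 (A : Set (ℕ × ℕ)) (hA : A ⊆ DIdx) (κ : ℝ) (hκ : 0 < κ) :
    ∃ B ⊆ A, (∀ k, (gen B k).Finite ∧ gen B k ⊆ gen A k) ∧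
      volume (limsupSet A) ≤ volume (limsupSet B) + ENNReal.ofReal κ := by
  obtain ⟨δ, hδ_pos, hδ_sum⟩ :=
    ENNReal.exists_pos_sum_of_countable' (ENNReal.ofReal_pos.2 hκ).ne' ℕ
  obtain ⟨sel, hsel_sub, hsel_fin, hsel_vol⟩ := exists_finite_selection hδ_pos
  have hF := selected_subset_gen (A := A) hsel_sub
  have hgen := gen_iUnion hF (selected_nested hsel_sub)
  have hlim : limsupSet (⋃ n, selected A sel n) = ⋂ n, dUnion (selected A sel n) := by
    simp only [limsupSet, genStar, hgen, dUnion]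
  refine ⟨⋃ n, selected A sel n, iUnion_subset fun n => (hF n).trans (gen_subset A n),
    fun k => ⟨hgen k ▸ hsel_fin _ _, hgen k ▸ hF k⟩, ?_⟩
  have hmissed (n : ℕ) :
      volume (dUnion (candidates A sel n) \ dUnion (selected A sel n)) ≤ δ n :=
    hsel_vol n _ ((candidates_subset_gen n).trans ((gen_subset A n).trans hA))
  calc volume (limsupSet A)
      ≤ volume (⋂ n, dUnion (selected A sel n)) +
          ∑' n, volume (dUnion (candidates A sel n) \ dUnion (selected A sel n)) :=
        (measure_mono (limsupSet_subset hsel_sub)).trans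
          ((measure_union_le _ _).trans (by gcongr; exact measure_iUnion_le _))
    _ ≤ volume (limsupSet (⋃ n, selected A sel n)) + ENNReal.ofReal κ := by
        rw [hlim]
        gcongr
        exact (ENNReal.tsum_le_tsum hmissed).trans hδ_sum.le
end

section
/- Let A ⊆ D, n ∈ ℕ, κ ∈ (0, 1/2), and let H ⊆ G_n(A) be a non-empty finite collection of pairwise disjoint dyadic intervals such that, with A∞ = limsup(A), one has |H* ∩ A∞| > (1−κ)|H*|. Then for any signs ε̄ ∈ {−1,1}^H, each of the sets C = H*_{ε̄} and C = H*_{−ε̄} satisfies |H*|/2 ≥ |C ∩ A∞| > (1−2κ)|C| = (1−2κ)|H*|/2. -/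
/-! On an interval `I ∈ H` the sum `∑ ε_J h_J` reduces to `ε_I h_I`, since the `h_J` have
disjoint supports. So the level set `{∑ ε_J h_J = s}` is the union of one half of each `I ∈ H`,
of measure `|H*|/2`, and `H*` is covered by the level sets for `s` and `-s`. Subadditivity then
gives `|C ∩ A∞| ≥ |H* ∩ A∞| - |H*|/2 > (1 - κ)|H*| - |H*|/2 = (1 - 2κ)|H*|/2`. -/

open MeasureTheory Set

/-- The Haar function `h_I = χ_{I⁺} − χ_{I⁻}` of the dyadic interval encoded by `p`. -/
noncomputable def haarFn (p : ℕ × ℕ) : ℝ → ℝ := fun x =>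
  (Set.Ico (((p.2 : ℝ) - 1) / 2 ^ p.1)
      (((((p.2 : ℝ) - 1) / 2 ^ p.1) + ((p.2 : ℝ) / 2 ^ p.1)) / 2)).indicator 1 x -
  (Set.Ico (((((p.2 : ℝ) - 1) / 2 ^ p.1) + ((p.2 : ℝ) / 2 ^ p.1)) / 2)
      ((p.2 : ℝ) / 2 ^ p.1)).indicator 1 x

noncomputable def haarIco (a b : ℝ) : ℝ → ℝ :=
  (Ico a ((a + b) / 2)).indicator 1 - (Ico ((a + b) / 2) b).indicator 1

theorem haarFn_eq_haarIco (p : ℕ × ℕ) :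
    haarFn p = haarIco (((p.2 : ℝ) - 1) / 2 ^ p.1) ((p.2 : ℝ) / 2 ^ p.1) := rfl

section HaarIco

variable {a b x t : ℝ}

theorem measurable_haarIco : Measurable (haarIco a b) :=
  (measurable_const.indicator measurableSet_Ico).sub (measurable_const.indicator measurableSet_Ico)

theorem haarIco_of_mem_left (hx : x ∈ Ico a ((a + b) / 2)) : haarIco a b x = 1 := by
  have hr : x ∉ Ico ((a + b) / 2) b := fun h => h.1.not_gt hx.2
  simp [haarIco, hx, hr]

theorem haarIco_of_mem_right (hx : x ∈ Ico ((a + b) / 2) b) : haarIco a b x = -1 := by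
  have hl : x ∉ Ico a ((a + b) / 2) := fun h => hx.1.not_gt h.2
  simp [haarIco, hx, hl]

theorem haarIco_of_notMem_left_of_notMem_right (hl : x ∉ Ico a ((a + b) / 2))
    (hr : x ∉ Ico ((a + b) / 2) b) : haarIco a b x = 0 := by
  simp [haarIco, hl, hr]

theorem haarIco_eq_zero (hx : x ∉ Ico a b) : haarIco a b x = 0 :=
  haarIco_of_notMem_left_of_notMem_right (fun h => hx ⟨h.1, by linarith [h.1, h.2]⟩)
    (fun h => hx ⟨by linarith [h.1, h.2], h.2⟩)

theorem haarIco_eq_one_or_neg_one (hx : x ∈ Ico a b) :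
    haarIco a b x = 1 ∨ haarIco a b x = -1 := by
  rcases lt_or_ge x ((a + b) / 2) with h | h
  · exact .inl (haarIco_of_mem_left ⟨hx.1, h⟩)
  · exact .inr (haarIco_of_mem_right ⟨h, hx.2⟩)

theorem setOf_haarIco_eq_one : {x | haarIco a b x = 1} = Ico a ((a + b) / 2) := by
  ext x
  refine ⟨fun h => by_contra fun hl => ?_, haarIco_of_mem_left⟩
  by_cases hr : x ∈ Ico ((a + b) / 2) b
  · rw [mem_ofPred_eq, haarIco_of_mem_right hr] at h; norm_num at h
  · rw [mem_ofPred_eq, haarIco_of_notMem_left_of_notMem_right hl hr] at h; norm_num at h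

theorem setOf_haarIco_eq_neg_one : {x | haarIco a b x = -1} = Ico ((a + b) / 2) b := by
  ext x
  refine ⟨fun h => by_contra fun hr => ?_, haarIco_of_mem_right⟩
  by_cases hl : x ∈ Ico a ((a + b) / 2)
  · rw [mem_ofPred_eq, haarIco_of_mem_left hl] at h; norm_num at h
  · rw [mem_ofPred_eq, haarIco_of_notMem_left_of_notMem_right hl hr] at h; norm_num at h

theorem volume_setOf_haarIco_eq (ht : t = 1 ∨ t = -1) :
    volume {x | haarIco a b x = t} = volume (Ico a b) / 2 := by
  have half : ∀ c d : ℝ, d - c = (b - a) / 2 → volume (Ico c d) = volume (Ico a b) / 2 := by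
    intro c d hcd
    rw [Real.volume_Ico, Real.volume_Ico, hcd, ENNReal.ofReal_div_of_pos two_pos,
      ENNReal.ofReal_ofNat]
  rcases ht with rfl | rfl
  · rw [setOf_haarIco_eq_one]; exact half _ _ (by ring)
  · rw [setOf_haarIco_eq_neg_one]; exact half _ _ (by ring)

theorem volume_setOf_mul_haarIco_eq {ε s : ℝ} (hε : ε = 1 ∨ ε = -1) (hs : s = 1 ∨ s = -1) :
    volume {x | ε * haarIco a b x = s} = volume (Ico a b) / 2 := by
  rcases hε with rfl | rfl
  · simpa only [one_mul] using volume_setOf_haarIco_eq hs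
  · have hflip : {x | -1 * haarIco a b x = s} = {x | haarIco a b x = -s} := by
      ext x; simp only [mem_ofPred_eq, neg_one_mul, neg_eq_iff_eq_neg]
    rw [hflip]
    exact volume_setOf_haarIco_eq (by rcases hs with rfl | rfl <;> norm_num)

end HaarIco

section DisjointSupports

variable {ι α M : Type*} [AddCommMonoid M] {H : Finset ι} {S : ι → Set α} {f : ι → α → M}
  {s : M}

theorem setOf_eq_subset_of_eq_zero {g : α → M} {T : Set α} (hg : ∀ x ∉ T, g x = 0)
    (hs : s ≠ 0) : {x | g x = s} ⊆ T :=
  fun x hx => by_contra fun hxT => hs (hx.symm.trans (hg x hxT))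

theorem Finset.sum_apply_eq_of_pairwiseDisjoint (hS : (H : Set ι).PairwiseDisjoint S)
    (hf : ∀ i ∈ H, ∀ x ∉ S i, f i x = 0) {i : ι} (hi : i ∈ H) {x : α} (hx : x ∈ S i) :
    ∑ j ∈ H, f j x = f i x :=
  Finset.sum_eq_single_of_mem i hi fun j hj hji =>
    hf j hj x fun hxj => Set.disjoint_left.mp (hS hj hi hji) hxj hx

theorem setOf_sum_eq_biUnion_of_pairwiseDisjoint (hS : (H : Set ι).PairwiseDisjoint S)
    (hf : ∀ i ∈ H, ∀ x ∉ S i, f i x = 0) (hs : s ≠ 0) :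
    {x | ∑ i ∈ H, f i x = s} = ⋃ i ∈ H, {x | f i x = s} := by
  ext x
  simp only [mem_ofPred_eq, mem_iUnion, exists_prop]
  constructor
  · intro hx
    by_cases hcov : ∃ i ∈ H, x ∈ S i
    · obtain ⟨i, hi, hxi⟩ := hcov
      exact ⟨i, hi, Finset.sum_apply_eq_of_pairwiseDisjoint hS hf hi hxi ▸ hx⟩
    · push Not at hcov
      rw [Finset.sum_eq_zero fun i hi => hf i hi x (hcov i hi)] at hx
      exact absurd hx.symm hs
  · rintro ⟨i, hi, hxi⟩
    rwa [Finset.sum_apply_eq_of_pairwiseDisjoint hS hf hi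
      (setOf_eq_subset_of_eq_zero (hf i hi) hs hxi)]

end DisjointSupports

section DyadicHaarSums

variable {H : Finset (ℕ × ℕ)} {ε : ℕ × ℕ → ℝ} {s : ℝ}

theorem mul_haarFn_eq_zero (c : ℝ) {p : ℕ × ℕ} {x : ℝ} (hx : x ∉ dIco p) :
    c * haarFn p x = 0 := by
  rw [haarFn_eq_haarIco, haarIco_eq_zero hx, mul_zero]

theorem volume_setOf_sum_haarFn_eq (hH : (H : Set (ℕ × ℕ)).PairwiseDisjoint dIco)
    (hε : ∀ I ∈ H, ε I = 1 ∨ ε I = -1) (hs : s = 1 ∨ s = -1) :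
    volume {x | ∑ I ∈ H, ε I * haarFn I x = s} = volume (⋃ I ∈ H, dIco I) / 2 := by
  have hs0 : s ≠ 0 := by rcases hs with rfl | rfl <;> norm_num
  have hsupp : ∀ I, ∀ x ∉ dIco I, ε I * haarFn I x = 0 := fun I _ hx => mul_haarFn_eq_zero _ hx
  rw [setOf_sum_eq_biUnion_of_pairwiseDisjoint hH (fun I _ => hsupp I) hs0,
    measure_biUnion_finset (hH.mono fun I => setOf_eq_subset_of_eq_zero (hsupp I) hs0) _,
    measure_biUnion_finset hH fun _ _ => measurableSet_Ico, div_eq_mul_inv, Finset.sum_mul]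
  · exact Finset.sum_congr rfl fun I hI => volume_setOf_mul_haarIco_eq (hε I hI) hs
  · exact fun I _ => measurableSet_eq_fun (measurable_haarIco.const_mul _) measurable_const

theorem biUnion_dIco_subset_setOf_sum_haarFn_eq (hH : (H : Set (ℕ × ℕ)).PairwiseDisjoint dIco)
    (hε : ∀ I ∈ H, ε I = 1 ∨ ε I = -1) (hs : s = 1 ∨ s = -1) :
    ⋃ I ∈ H, dIco I ⊆
      {x | ∑ I ∈ H, ε I * haarFn I x = s} ∪ {x | ∑ I ∈ H, ε I * haarFn I x = -s} := by
  intro x hx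
  obtain ⟨I, hI, hxI⟩ := mem_iUnion₂.mp hx
  have hsum : ∑ J ∈ H, ε J * haarFn J x = ε I * haarFn I x :=
    Finset.sum_apply_eq_of_pairwiseDisjoint (f := fun J y => ε J * haarFn J y) hH
      (fun J _ _ hy => mul_haarFn_eq_zero (ε J) hy) hI hxI
  rw [mem_union, mem_ofPred_eq, mem_ofPred_eq, hsum, haarFn_eq_haarIco]
  rcases hε I hI with hεI | hεI <;> rcases haarIco_eq_one_or_neg_one hxI with h | h <;>
    rcases hs with rfl | rfl <;> norm_num [hεI, h]

end DyadicHaarSums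

theorem lt_measure_inter_of_subset_union {α : Type*} [MeasurableSpace α] {μ : Measure α}
    {E C C' L : Set α} {κ : ℝ} (hκ : κ ≤ 1 / 2) (hE : E ⊆ C ∪ C') (hC' : μ (C' ∩ L) ≤ μ E / 2)
    (hEL : ENNReal.ofReal (1 - κ) * μ E < μ (E ∩ L)) :
    ENNReal.ofReal (1 - 2 * κ) * (μ E / 2) < μ (C ∩ L) := by
  by_contra! hC
  have hcoef :
      ENNReal.ofReal (1 - 2 * κ) * (μ E / 2) + μ E / 2 = ENNReal.ofReal (1 - κ) * μ E :=
    calc ENNReal.ofReal (1 - 2 * κ) * (μ E / 2) + μ E / 2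
        = ENNReal.ofReal (2 * (1 - κ)) * (μ E / 2) := by
          rw [← add_one_mul, ← ENNReal.ofReal_one, ← ENNReal.ofReal_add (by linarith) zero_le_one]
          ring_nf
      _ = ENNReal.ofReal (1 - κ) * (2 * (μ E / 2)) := by
          rw [ENNReal.ofReal_mul zero_le_two, ENNReal.ofReal_ofNat, mul_left_comm, mul_assoc]
      _ = ENNReal.ofReal (1 - κ) * μ E := by
          rw [ENNReal.mul_div_cancel two_ne_zero ENNReal.ofNat_ne_top]
  refine hEL.not_ge ?_
  calc μ (E ∩ L) ≤ μ (C ∩ L ∪ C' ∩ L) :=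
        measure_mono (union_inter_distrib_right C C' L ▸ inter_subset_inter_left L hE)
    _ ≤ μ (C ∩ L) + μ (C' ∩ L) := measure_union_le _ _
    _ ≤ ENNReal.ofReal (1 - 2 * κ) * (μ E / 2) + μ E / 2 := add_le_add hC hC'
    _ = ENNReal.ofReal (1 - κ) * μ E := hcoef

theorem stmt_12_general (A : Set (ℕ × ℕ))
    (κ : ℝ) (hκ : κ ∈ Set.Ioo (0 : ℝ) (1 / 2))
    (H : Finset (ℕ × ℕ))
    (hdisj : (H : Set (ℕ × ℕ)).Pairwise fun I J => Disjoint (dIco I) (dIco J))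
    (ε : ℕ × ℕ → ℝ) (hε : ∀ I ∈ H, ε I = 1 ∨ ε I = -1)
    (Hstar : Set ℝ) (hHstar : Hstar = ⋃ I ∈ H, dIco I)
    (hbig : ENNReal.ofReal (1 - κ) * volume Hstar < volume (Hstar ∩ limsupSet A)) :
    ∀ s : ℝ, s = 1 ∨ s = -1 →
      volume ({x | ∑ I ∈ H, ε I * haarFn I x = s} ∩ limsupSet A) ≤ volume Hstar / 2 ∧
      ENNReal.ofReal (1 - 2 * κ) * (volume Hstar / 2) <
        volume ({x | ∑ I ∈ H, ε I * haarFn I x = s} ∩ limsupSet A) ∧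
      volume {x | ∑ I ∈ H, ε I * haarFn I x = s} = volume Hstar / 2 := by
  subst hHstar
  intro s hs
  have hvol := volume_setOf_sum_haarFn_eq hdisj hε hs
  have hvol_neg := volume_setOf_sum_haarFn_eq hdisj hε (s := -s)
    (by rcases hs with rfl | rfl <;> norm_num)
  refine ⟨(measure_mono inter_subset_left).trans hvol.le, ?_, hvol⟩
  exact lt_measure_inter_of_subset_union hκ.2.le
    (biUnion_dIco_subset_setOf_sum_haarFn_eq hdisj hε hs)
    ((measure_mono inter_subset_left).trans hvol_neg.le) hbig

/-- Let `H ⊆ 𝒢ₙ(A)` be finite, nonempty, with pairwise disjoint intervals, and suppose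
`|H* ∩ limsup A| > (1−κ)|H*|` with `κ ∈ (0, 1/2)`.  Then for any signs `ε̄ ∈ {−1,1}^H`,
each of the sets `C = H*_{ε̄} = {∑ ε_I h_I = 1}` and `C = H*_{−ε̄} = {∑ ε_I h_I = −1}`
satisfies `|H*|/2 ≥ |C ∩ limsup A| > (1−2κ)|C| = (1−2κ)|H*|/2`. -/
theorem stmt_12 (A : Set (ℕ × ℕ)) (hA : A ⊆ DIdx) (n : ℕ)
    (κ : ℝ) (hκ : κ ∈ Set.Ioo (0 : ℝ) (1 / 2))
    (H : Finset (ℕ × ℕ)) (hne : H.Nonempty) (hsub : ↑H ⊆ gen A n)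
    (hdisj : (H : Set (ℕ × ℕ)).Pairwise fun I J => Disjoint (dIco I) (dIco J))
    (ε : ℕ × ℕ → ℝ) (hε : ∀ I ∈ H, ε I = 1 ∨ ε I = -1)
    (Hstar : Set ℝ) (hHstar : Hstar = ⋃ I ∈ H, dIco I)
    (hbig : ENNReal.ofReal (1 - κ) * volume Hstar < volume (Hstar ∩ limsupSet A)) :
    ∀ s : ℝ, s = 1 ∨ s = -1 →
      volume ({x | ∑ I ∈ H, ε I * haarFn I x = s} ∩ limsupSet A) ≤ volume Hstar / 2 ∧
      ENNReal.ofReal (1 - 2 * κ) * (volume Hstar / 2) <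
        volume ({x | ∑ I ∈ H, ε I * haarFn I x = s} ∩ limsupSet A) ∧
      volume {x | ∑ I ∈ H, ε I * haarFn I x = s} = volume Hstar / 2 :=
  stmt_12_general A κ hκ H hdisj ε hε Hstar hHstar hbig
end
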